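/- arXiv:2508.13125 — 10 statements merged into one kernel-verified Lean document; each statement's English description precedes it below -/
import Mathlib

section
/- Let m ≥ 1 and h ≥ 2 be integers, and let A be a finite subset of an additive abelian group G with |A| = m such that the h-fold sumset hA satisfies |hA| = C(m+h−1, h). Then the (h−1)-fold sumset satisfies |(h−1)A| = C(m+h−2, h−1). -/
open Finset Pointwise

/-- The `h`-fold sumset `hA`: the set of all sums of `h` elements of `A`
(repetitions allowed). -/
def foldSumset {G : Type*} [AddCommMonoid G] [DecidableEq G] : ℕ → Finset G → Finset G
  | 0, _ => {0}
  | n + 1, A => A + foldSumset n A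

/-- The restricted `h`-fold sumset `h^∧A`: the set of all sums of `h` pairwise
distinct elements of `A`, i.e. sums `∑ x ∈ S, x` over `S ⊆ A` with `|S| = h`. -/
def restrictedSumset {G : Type*} [AddCommMonoid G] [DecidableEq G] (h : ℕ) (A : Finset G) :
    Finset G :=
  (A.powersetCard h).image fun S => S.sum id

/-- The restricted `[0,h]`-fold sumset `[0,h]^∧A = ⋃_{s=0}^{h} s^∧A`. -/
def restrictedIntervalSumset {G : Type*} [AddCommMonoid G] [DecidableEq G] (h : ℕ)
    (A : Finset G) : Finset G :=
  (Finset.range (h + 1)).biUnion fun s => restrictedSumset s A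

/-!
The sums of `k` elements of `A` are the images of the size-`k` multisets on `A` under
`s ↦ ∑ s`, and there are `C(|A| + k - 1, k)` such multisets; so `|kA|` attains this bound
exactly when distinct multisets have distinct sums. Prepending a fixed `a ∈ A` to multisets
of size `h - 1` transports this injectivity from size `h` down to size `h - 1`.
-/

theorem Finset.card_sym {α : Type*} [DecidableEq α] (s : Finset α) (k : ℕ) :
    #(s.sym k) = (#s + k - 1).choose k := by
  conv_lhs => rw [← s.attach_map_val, sym_map, ← univ_eq_attach, sym_univ]
  rw [card_map, card_univ, Sym.card_sym_eq_choose, Fintype.card_coe]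

section

variable {G : Type*} [AddCommMonoid G] [DecidableEq G]

theorem foldSumset_eq_image_sym (k : ℕ) (A : Finset G) :
    foldSumset k A = (A.sym k).image fun s : Sym G k => (s : Multiset G).sum := by
  induction k with
  | zero => rfl
  | succ k ih =>
    ext x
    simp only [foldSumset, ih, mem_add, mem_image, mem_sym_iff]
    constructor
    · rintro ⟨a, ha, _, ⟨s, hs, rfl⟩, rfl⟩
      refine ⟨a ::ₛ s, fun b hb => ?_, by simp [Sym.coe_cons]⟩
      exact (Sym.mem_cons.1 hb).elim (· ▸ ha) (hs b)
    · rintro ⟨s, hs, rfl⟩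
      obtain ⟨a, t, rfl⟩ := s.exists_eq_cons_of_succ
      exact ⟨a, hs a (Sym.mem_cons_self a t), _,
        ⟨t, fun b hb => hs b (Sym.mem_cons_of_mem hb), rfl⟩, by simp [Sym.coe_cons]⟩

theorem card_foldSumset_eq_choose_iff (k : ℕ) (A : Finset G) :
    #(foldSumset k A) = (#A + k - 1).choose k ↔
      Set.InjOn (fun s : Sym G k => (s : Multiset G).sum) (A.sym k) := by
  rw [foldSumset_eq_image_sym, ← card_sym, card_image_iff]

theorem injOn_sum_sym_of_injOn_sum_sym_succ {A : Finset G} {a : G} (ha : a ∈ A) {k : ℕ}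
    (hinj : Set.InjOn (fun s : Sym G (k + 1) => (s : Multiset G).sum) (A.sym (k + 1))) :
    Set.InjOn (fun s : Sym G k => (s : Multiset G).sum) (A.sym k) := by
  have cons_mem : ∀ s ∈ A.sym k, a ::ₛ s ∈ A.sym (k + 1) := fun s hs =>
    mem_sym_iff.2 fun b hb => (Sym.mem_cons.1 hb).elim (· ▸ ha) (mem_sym_iff.1 hs b)
  intro s hs t ht hst
  refine (Sym.cons_inj_right a s t).1 (hinj (cons_mem s hs) (cons_mem t ht) ?_)
  simp only [Sym.coe_cons, Multiset.sum_cons]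
  exact congrArg (a + ·) hst

end

theorem fold_sumset_pred_card {G : Type*} [AddCommGroup G] [DecidableEq G]
    (m h : ℕ) (hm : 1 ≤ m) (hh : 2 ≤ h) (A : Finset G) (hA : A.card = m)
    (hmax : (foldSumset h A).card = Nat.choose (m + h - 1) h) :
    (foldSumset (h - 1) A).card = Nat.choose (m + h - 2) (h - 1) := by
  obtain ⟨k, rfl⟩ : ∃ k, h = k + 1 := ⟨h - 1, by omega⟩
  obtain ⟨a, ha⟩ : A.Nonempty := card_pos.1 (by omega)
  subst hA
  rw [card_foldSumset_eq_choose_iff] at hmax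
  rw [Nat.add_sub_cancel, show #A + (k + 1) - 2 = #A + k - 1 by omega,
    card_foldSumset_eq_choose_iff]
  exact injOn_sum_sym_of_injOn_sum_sym_succ ha hmax
end

section
/- Let k be a positive integer, let h ≥ 2 be an integer, let m = 2^(⌊log₂ h⌋+1)·k − 1, and let n = C(m+h−1, h). Then for every subset A of the cyclic group ℤ/nℤ with |A| = m, the h-fold sumset hA satisfies |hA| < n; that is, ν(ℤ_n, m, h) < min{n, C(m+h−1, h)}. -/
open Finset Pointwise

section Aux

variable {G : Type*} [AddCommMonoid G] [DecidableEq G]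

lemma foldSumset_eq_sym_image (h : ℕ) (A : Finset G) :
    foldSumset h A = (A.sym h).image (fun (s : Sym G h) => (s : Multiset G).sum) := by
  induction h with
  | zero =>
      rw [foldSumset, Finset.sym_zero]
      simp [show ((∅ : Sym G 0) : Multiset G) = 0 from rfl]
  | succ h ih =>
      ext x
      rw [foldSumset, ih]
      simp only [Finset.mem_add, Finset.mem_image, Finset.mem_sym_iff]
      constructor
      · rintro ⟨a, ha, y, ⟨s, hs, rfl⟩, rfl⟩
        refine ⟨a ::ₛ s, fun b hb => ?_, ?_⟩
        · rcases Sym.mem_cons.mp hb with rfl | hb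
          · exact ha
          · exact hs b hb
        · rw [Sym.coe_cons, Multiset.sum_cons]
      · rintro ⟨s, hs, rfl⟩
        obtain ⟨a, s', rfl⟩ := s.exists_eq_cons_of_succ
        refine ⟨a, hs a (Sym.mem_cons_self a s'), (s' : Multiset G).sum,
          ⟨s', fun b hb => hs b (Sym.mem_cons_of_mem hb), rfl⟩, ?_⟩
        rw [Sym.coe_cons, Multiset.sum_cons]

end Aux

section Card

variable {α : Type*} [DecidableEq α]

lemma card_finset_sym (A : Finset α) (n : ℕ) :
    (A.sym n).card = (A.card + n - 1).choose n := by
  classical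
  have hcard : (A.sym n).card = Fintype.card (Sym {x // x ∈ A} n) := by
    rw [← Finset.card_univ]
    symm
    apply Finset.card_bij (fun (s : Sym {x // x ∈ A} n) _ => s.map (Subtype.val : {x // x ∈ A} → α))
    · intro s _
      rw [Finset.mem_sym_iff]
      intro a ha
      obtain ⟨b, _, rfl⟩ := Sym.mem_map.mp ha
      exact b.2
    · intro s _ s' _ hss'
      exact Sym.map_injective Subtype.val_injective _ hss'
    · intro s hs
      rw [Finset.mem_sym_iff] at hs
      refine ⟨Sym.mk ((s : Multiset α).attach.map
        (fun x => (⟨x.1, hs x.1 (Sym.mem_coe.mp x.2)⟩ : {x // x ∈ A}))) (by simp), Finset.mem_univ _, ?_⟩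
      apply Sym.coe_injective
      rw [Sym.coe_map, Sym.coe_mk, Multiset.map_map]
      exact (s : Multiset α).attach_map_val
  rw [hcard, Sym.card_sym_eq_choose, Fintype.card_coe]

end Card

section Count

variable {α : Type*} [DecidableEq α]

lemma sym_count_decomp (A : Finset α) (a : α) (ha : a ∈ A) (h : ℕ) :
    ∑ s ∈ A.sym (h + 1), Multiset.count a (s : Multiset α)
      = (∑ s ∈ A.sym h, Multiset.count a (s : Multiset α)) + (A.sym h).card := by
  classical
  have hsub : (A.sym h).image (fun s => a ::ₛ s) ⊆ A.sym (h + 1) := by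
    intro s hs
    obtain ⟨s', hs', rfl⟩ := Finset.mem_image.mp hs
    rw [Finset.mem_sym_iff] at hs' ⊢
    intro b hb
    rcases Sym.mem_cons.mp hb with rfl | hb
    · exact ha
    · exact hs' b hb
  have hzero : ∀ s ∈ A.sym (h + 1), s ∉ (A.sym h).image (fun s => a ::ₛ s) →
      Multiset.count a (s : Multiset α) = 0 := by
    intro s hs hnot
    by_contra hc
    have ha : a ∈ s := by
      rw [← Sym.mem_coe]
      exact Multiset.count_pos.mp (Nat.pos_of_ne_zero hc)
    exact hnot (Finset.mem_image.mpr ⟨s.erase a ha, by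
      rw [Finset.mem_sym_iff]
      intro b hb
      exact Finset.mem_sym_iff.mp hs b (by
        have := Sym.mem_cons_of_mem (b := a) hb
        rwa [Sym.cons_erase ha] at this), Sym.cons_erase ha⟩)
  rw [← Finset.sum_subset hsub hzero, Finset.sum_image (by
    intro x _ y _ hxy
    exact (Sym.cons_inj_right a x y).mp hxy)]
  have : ∀ s ∈ A.sym h, Multiset.count a ((a ::ₛ s : Sym α (h+1)) : Multiset α)
      = Multiset.count a (s : Multiset α) + 1 := by
    intro s _
    rw [Sym.coe_cons, Multiset.count_cons_self]
  rw [Finset.sum_congr rfl this, Finset.sum_add_distrib, Finset.sum_const, smul_eq_mul, mul_one]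

lemma sym_count (A : Finset α) (a : α) (ha : a ∈ A) :
    ∀ h : ℕ, ∑ s ∈ A.sym (h + 1), Multiset.count a (s : Multiset α)
      = (A.card + h).choose h := by
  intro h
  induction h with
  | zero =>
      rw [sym_count_decomp A a ha, Finset.sym_zero]
      simp [show ((∅ : Sym α 0) : Multiset α) = 0 from rfl]
  | succ h ih =>
      rw [sym_count_decomp A a ha, ih, card_finset_sym]
      have h1 : A.card + (h + 1) - 1 = A.card + h := by omega
      rw [h1]
      have h2 := Nat.choose_succ_succ (A.card + h) h
      have h3 : (A.card + h).succ = A.card + (h+1) := by omega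
      have h4 : h.succ = h + 1 := rfl
      rw [h3, h4] at h2
      omega

end Count

section SymSum

variable {G : Type*} [AddCommMonoid G] [DecidableEq G]

lemma sym_sum (A : Finset G) (h : ℕ) :
    ∑ s ∈ A.sym (h + 1), (s : Multiset G).sum = (A.card + h).choose h • ∑ a ∈ A, a := by
  have hstep : ∀ s ∈ A.sym (h + 1), (s : Multiset G).sum
      = ∑ a ∈ A, Multiset.count a (s : Multiset G) • a := by
    intro s hs
    rw [Finset.sum_multiset_count]
    apply Finset.sum_subset
    · intro x hx
      exact Finset.mem_sym_iff.mp hs x (Sym.mem_coe.mp (Multiset.mem_toFinset.mp hx))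
    · intro x _ hx
      rw [Multiset.count_eq_zero_of_notMem (fun hm => hx (Multiset.mem_toFinset.mpr hm)),
        zero_smul]
  rw [Finset.sum_congr rfl hstep, Finset.sum_comm, Finset.smul_sum]
  apply Finset.sum_congr rfl
  intro a ha
  rw [← Finset.sum_smul, sym_count A a ha h]

end SymSum

lemma zmod_sum_univ (n : ℕ) [NeZero n] :
    ∑ x : ZMod n, x = ((n * (n - 1) / 2 : ℕ) : ZMod n) := by
  rw [← Finset.sum_range_id, Nat.cast_sum]
  exact (Finset.sum_nbij' (fun i => ((i : ℕ) : ZMod n)) (fun x => x.val)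
    (fun i _ => Finset.mem_univ _)
    (fun x _ => Finset.mem_range.mpr (ZMod.val_lt x))
    (fun i hi => ZMod.val_cast_of_lt (Finset.mem_range.mp hi))
    (fun x _ => ZMod.natCast_rightInverse x)
    (fun i _ => rfl)).symm

lemma testbit_one_of (x i : ℕ) (hx : x.testBit i = true) : x / 2 ^ i % 2 = 1 := by
  rw [Nat.testBit_eq_decide_div_mod_eq] at hx
  exact of_decide_eq_true hx

lemma testbit_zero_of (x i : ℕ) (hx : x.testBit i = false) : x / 2 ^ i % 2 = 0 := by
  rw [Nat.testBit_eq_decide_div_mod_eq] at hx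
  have := of_decide_eq_false hx
  omega

lemma even_choose_aux (t k h : ℕ) (hk : 0 < k) (hh : 2 ≤ h)
    (h2t : 2 ^ t ≤ h) (hlt : h < 2 ^ (t + 1)) :
    2 ∣ (2 ^ (t + 1) * k + (h - 2)).choose h := by
  haveI : Fact (Nat.Prime 2) := ⟨Nat.prime_two⟩
  set M := 2 ^ (t + 1) * k + (h - 2) with hM
  -- the highest bit where h and h-2 differ
  set d := h ^^^ (h - 2) with hd
  have hd0 : d ≠ 0 := by
    rw [hd, Ne, xor_eq_zero_iff]
    omega
  set L := Nat.log 2 d with hL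
  have hdL : d.testBit L = true := by
    rw [Nat.testBit_eq_decide_div_mod_eq]
    have h1 : 2 ^ L ≤ d := Nat.pow_log_le_self 2 hd0
    have h2 : d < 2 ^ (L + 1) := Nat.lt_pow_succ_log_self (by norm_num) d
    have h3 : d / 2 ^ L = 1 := by
      rw [pow_succ] at h2
      apply Nat.div_eq_of_lt_le (by omega) (by omega)
    rw [h3]
    simp
  have hhigh : ∀ j, L < j → h.testBit j = (h - 2).testBit j := by
    intro j hj
    have h2 : d < 2 ^ (L + 1) := Nat.lt_pow_succ_log_self (by norm_num) d
    have h4 : d < 2 ^ j := lt_of_lt_of_le h2 (Nat.pow_le_pow_right (by norm_num) hj)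
    have h5 : d.testBit j = false := Nat.testBit_lt_two_pow h4
    rw [hd, Nat.testBit_xor] at h5
    cases hbh : h.testBit j <;> cases hbh2 : (h - 2).testBit j <;>
      simp [hbh, hbh2] at h5 ⊢
  have hbits : h.testBit L = true ∧ (h - 2).testBit L = false := by
    have hx : h.testBit L ≠ (h - 2).testBit L := by
      intro hcon
      rw [hd, Nat.testBit_xor, hcon] at hdL
      simp at hdL
    cases hbh : h.testBit L <;> cases hbh2 : (h - 2).testBit L
    · rw [hbh, hbh2] at hx; exact absurd rfl hx
    · exfalso
      have : h < h - 2 := Nat.lt_of_testBit L hbh hbh2 (fun j hj => hhigh j hj)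
      omega
    · exact ⟨rfl, rfl⟩
    · rw [hbh, hbh2] at hx; exact absurd rfl hx
  have hLt : L ≤ t := by
    have hd2 : d < 2 ^ (t + 1) :=
      Nat.xor_lt_two_pow hlt (by omega)
    have := Nat.log_lt_of_lt_pow hd0 hd2
    omega
  -- digits of M below t+1 agree with digits of h-2
  have hMdig : M / 2 ^ L % 2 = 0 := by
    have hsplit : 2 ^ (t + 1) = 2 ^ L * (2 ^ (t - L) * 2) := by
      rw [← pow_succ, ← pow_add]
      congr 1
      omega
    have : M = (h - 2) + 2 ^ L * (2 ^ (t - L) * 2 * k) := by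
      rw [hM, hsplit]; ring
    rw [this, Nat.add_mul_div_left _ _ (pow_pos (by norm_num) L)]
    have h6 : (h - 2) / 2 ^ L % 2 = 0 := testbit_zero_of _ _ hbits.2
    obtain ⟨q, hq⟩ : ∃ q, 2 ^ (t - L) * 2 * k = 2 * q := ⟨2 ^ (t - L) * k, by ring⟩
    rw [hq]
    omega
  have hhdig : h / 2 ^ L % 2 = 1 := testbit_one_of _ _ hbits.1
  -- Lucas
  have hluc := Choose.choose_modEq_choose_mul_prod_range_choose
    (n := M) (k := h) (p := 2) (t + 1)
  have hprod : ∏ i ∈ Finset.range (t + 1), (M / 2 ^ i % 2).choose (h / 2 ^ i % 2) = 0 := by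
    apply Finset.prod_eq_zero (Finset.mem_range.mpr (by omega : L < t + 1))
    rw [hMdig, hhdig]
    rfl
  rw [hprod] at hluc
  have : ((M.choose h : ℤ)) ≡ 0 [ZMOD 2] := by
    simpa using hluc
  have h7 : (2 : ℤ) ∣ (M.choose h : ℤ) := Int.modEq_zero_iff_dvd.mp this
  exact_mod_cast h7


theorem fold_sumset_card_lt_of_cyclic (k h m n : ℕ) (hk : 0 < k) (hh : 2 ≤ h)
    (hm : m = 2 ^ (Nat.log 2 h + 1) * k - 1) (hn : n = Nat.choose (m + h - 1) h) :
    ∀ A : Finset (ZMod n), A.card = m → (foldSumset h A).card < n := by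
  intro A hA
  set t := Nat.log 2 h with ht
  have hh0 : h ≠ 0 := by omega
  have h2t : 2 ^ t ≤ h := Nat.pow_log_le_self 2 hh0
  have hlt : h < 2 ^ (t + 1) := Nat.lt_pow_succ_log_self (by norm_num) h
  have hP2 : 2 ≤ 2 ^ (t + 1) := by
    calc 2 = 2 ^ 1 := rfl
    _ ≤ 2 ^ (t + 1) := Nat.pow_le_pow_right (by norm_num) (by omega)
  have hPk : 2 ≤ 2 ^ (t + 1) * k := le_trans hP2 (Nat.le_mul_of_pos_right _ hk)
  have hm1 : m + 1 = 2 ^ (t + 1) * k := by omega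
  have hmodd : m % 2 = 1 := by
    obtain ⟨q, hq⟩ : ∃ q, 2 ^ (t + 1) * k = 2 * q := ⟨2 ^ t * k, by rw [pow_succ]; ring⟩
    omega
  have hm2 : 1 ≤ m := by omega
  have hn0 : 0 < n := by rw [hn]; exact Nat.choose_pos (by omega)
  haveI : NeZero n := ⟨hn0.ne'⟩
  have hneven : 2 ∣ n := by
    have hMe : m + h - 1 = 2 ^ (t + 1) * k + (h - 2) := by omega
    rw [hn, hMe]
    exact even_choose_aux t k h hk hh h2t hlt
  by_contra hcon
  push_neg at hcon
  have himg := foldSumset_eq_sym_image h A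
  have hsymcard : (A.sym h).card = n := by
    rw [card_finset_sym, hA, hn]
  have hcard : (foldSumset h A).card = n :=
    le_antisymm (by rw [himg]; exact le_trans Finset.card_image_le (le_of_eq hsymcard)) hcon
  have hinj : Set.InjOn (fun (s : Sym (ZMod n) h) => (s : Multiset (ZMod n)).sum)
      (A.sym h : Set (Sym (ZMod n) h)) :=
    Finset.card_image_iff.mp (by rw [← himg, hcard, hsymcard])
  have huniv : (A.sym h).image (fun (s : Sym (ZMod n) h) => (s : Multiset (ZMod n)).sum)
      = Finset.univ :=
    Finset.eq_univ_of_card _ (by rw [← himg, hcard, ZMod.card])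
  obtain ⟨h', rfl⟩ : ∃ h', h = h' + 1 := ⟨h - 1, by omega⟩
  set c := (m + h').choose h' with hc
  set S := ∑ a ∈ A, a with hS
  have hkey : ((n * (n - 1) / 2 : ℕ) : ZMod n) = (c : ZMod n) * S := by
    rw [← zmod_sum_univ n]
    have : ∑ x : ZMod n, x
        = ∑ s ∈ A.sym (h' + 1), (s : Multiset (ZMod n)).sum := by
      rw [← huniv]
      exact Finset.sum_image (fun x hx y hy hxy => hinj hx hy hxy)
    rw [this, sym_sum A h', hA, ← hc, ← hS, nsmul_eq_mul]
  have hSval : ((c * S.val : ℕ) : ZMod n) = ((n * (n - 1) / 2 : ℕ) : ZMod n) := by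
    rw [Nat.cast_mul, ZMod.natCast_rightInverse S, ← hkey]
  have hmod : Nat.ModEq n (c * S.val) (n * (n - 1) / 2) :=
    (ZMod.natCast_eq_natCast_iff _ _ _).mp hSval
  obtain ⟨e, u, hu2, hnu⟩ := Nat.exists_eq_pow_mul_and_not_dvd hn0.ne' 2 (by norm_num)
  have he1 : 1 ≤ e := by
    rcases Nat.eq_zero_or_pos e with rfl | hpos
    · rw [pow_zero, one_mul] at hnu
      exact absurd (hnu ▸ hneven) hu2
    · exact hpos
  have hpe_dvd_n : 2 ^ e ∣ n := ⟨u, hnu⟩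
  have hid : n * (h' + 1) = c * m := by
    have hrec := Nat.choose_succ_right_eq (m + h') h'
    have hmm : m + (h' + 1) - 1 = m + h' := by omega
    rw [hn, hmm, hrec]
    congr 1
    omega
  have hpc : 2 ^ e ∣ c := by
    have h1 : 2 ^ e ∣ m * c := by
      rw [mul_comm m c, ← hid]
      exact hpe_dvd_n.mul_right _
    have hcop : Nat.Coprime (2 ^ e) m :=
      Nat.Coprime.pow_left _ (Nat.coprime_two_left.mpr (Nat.odd_iff.mpr hmodd))
    exact hcop.dvd_of_dvd_mul_left h1
  have hmod2 : Nat.ModEq (2 ^ e) (c * S.val) (n * (n - 1) / 2) := hmod.of_dvd hpe_dvd_n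
  have hdvd_g : 2 ^ e ∣ n * (n - 1) / 2 := by
    have h0 : Nat.ModEq (2 ^ e) (c * S.val) 0 :=
      Nat.modEq_zero_iff_dvd.mpr (hpc.mul_right _)
    exact Nat.modEq_zero_iff_dvd.mp (h0.symm.trans hmod2).symm
  have hg : n * (n - 1) / 2 = 2 ^ (e - 1) * (u * (n - 1)) := by
    have h2e : 2 ^ e = 2 * 2 ^ (e - 1) := by
      rw [← pow_succ']
      congr 1
      omega
    calc n * (n - 1) / 2 = 2 * (2 ^ (e - 1) * (u * (n - 1))) / 2 := by
          rw [hnu, h2e]; ring_nf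
      _ = 2 ^ (e - 1) * (u * (n - 1)) := Nat.mul_div_cancel_left _ (by norm_num)
  rw [hg] at hdvd_g
  have h2e' : 2 ^ e = 2 ^ (e - 1) * 2 := by
    rw [← pow_succ]
    congr 1
    omega
  rw [h2e'] at hdvd_g
  have hdvd2 : 2 ∣ u * (n - 1) :=
    (Nat.mul_dvd_mul_iff_left (pow_pos two_pos (e - 1))).mp hdvd_g
  rcases (Nat.prime_two.dvd_mul).mp hdvd2 with hduv | hdn1
  · exact hu2 hduv
  · obtain ⟨w, hw⟩ := hneven
    obtain ⟨w2, hw2⟩ := hdn1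
    omega
end

section
/- Let m and h be integers with 2 ≤ h ≤ m, and let A be a finite subset of an additive abelian group G with |A| = m such that the restricted h-fold sumset satisfies |h^∧A| = C(m, h). Let a ∈ A and B = A \ {a}. Then the restricted (h−1)-fold sumset of B satisfies |(h−1)^∧B| = C(m−1, h−1). -/
open Finset Pointwise

section
variable {G : Type*} [DecidableEq G]

theorem card_restrictedSumset_eq_choose_iff [AddCommMonoid G] (h : ℕ) (A : Finset G) :
    (restrictedSumset h A).card = A.card.choose h ↔
      Set.InjOn (fun S : Finset G => S.sum id) (A.powersetCard h) := by
  rw [restrictedSumset, ← card_powersetCard, card_image_iff]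

/-- `S ↦ insert a S` embeds the `h`-subsets of `A.erase a` into the `(h + 1)`-subsets of `A`
and shifts every sum by `a`. -/
theorem injOn_sum_powersetCard_erase [AddCancelCommMonoid G] {h : ℕ} {A : Finset G} {a : G}
    (ha : a ∈ A) (hinj : Set.InjOn (fun S : Finset G => S.sum id) (A.powersetCard (h + 1))) :
    Set.InjOn (fun S : Finset G => S.sum id) ((A.erase a).powersetCard h) := by
  have lift : ∀ S ∈ (A.erase a).powersetCard h,
      a ∉ S ∧ insert a S ∈ A.powersetCard (h + 1) := by
    intro S hS
    obtain ⟨hSA, hcard⟩ := mem_powersetCard.1 hS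
    have haS : a ∉ S := fun haS => notMem_erase a A (hSA haS)
    exact ⟨haS, mem_powersetCard.2
      ⟨insert_subset ha (hSA.trans (erase_subset a A)), by rw [card_insert_of_notMem haS, hcard]⟩⟩
  intro S hS T hT hST
  obtain ⟨haS, hS'⟩ := lift S hS
  obtain ⟨haT, hT'⟩ := lift T hT
  have hinsert : insert a S = insert a T :=
    hinj hS' hT' (by simp only [sum_insert haS, sum_insert haT, id] at hST ⊢; rw [hST])
  rw [← erase_insert haS, ← erase_insert haT, hinsert]

end

theorem restricted_sumset_erase_card_general {G : Type*} [AddCommGroup G] [DecidableEq G]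
    (m h : ℕ) (A : Finset G) (hA : A.card = m)
    (hmax : (restrictedSumset h A).card = Nat.choose m h) (a : G) (ha : a ∈ A) :
    (restrictedSumset (h - 1) (A.erase a)).card = Nat.choose (m - 1) (h - 1) := by
  subst hA
  rcases h with _ | h
  · simp [restrictedSumset]
  rw [Nat.add_sub_cancel, ← card_erase_of_mem ha]
  exact (card_restrictedSumset_eq_choose_iff _ _).2
    (injOn_sum_powersetCard_erase ha ((card_restrictedSumset_eq_choose_iff _ _).1 hmax))

theorem restricted_sumset_erase_card {G : Type*} [AddCommGroup G] [DecidableEq G]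
    (m h : ℕ) (hh : 2 ≤ h) (hhm : h ≤ m) (A : Finset G) (hA : A.card = m)
    (hmax : (restrictedSumset h A).card = Nat.choose m h) (a : G) (ha : a ∈ A) :
    (restrictedSumset (h - 1) (A.erase a)).card = Nat.choose (m - 1) (h - 1) :=
  restricted_sumset_erase_card_general m h A hA hmax a ha
end

section
/- Let k be a positive integer, let h ≥ 2 be an integer, let m = 2^(⌊log₂ h⌋+1)·k + 1, and let n = C(m, h). Then for every subset A of the cyclic group ℤ/nℤ with |A| = m, the restricted h-fold sumset satisfies |h^∧A| < n; that is, ν^∧(ℤ_n, m, h) < min{n, C(m, h)}. -/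
open Finset Pointwise

lemma sub_one_mod_of_mod_pos {x Q : ℕ} (hQ : 0 < Q) (hx : 0 < x % Q) :
    (x - 1) % Q = x % Q - 1 := by
  have hd := Nat.div_add_mod x Q
  have hlt : x % Q - 1 < Q := by have := Nat.mod_lt x hQ; omega
  have hx1 : x - 1 = x % Q - 1 + Q * (x / Q) := by omega
  rw [hx1, Nat.add_mul_mod_self_left, Nat.mod_eq_of_lt hlt]

lemma nt_main (k h m : ℕ) (hk : 0 < k) (hh : 2 ≤ h)
    (hm : m = 2 ^ (Nat.log 2 h + 1) * k + 1) :
    1 ≤ padicValNat 2 (m.choose h) ∧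
      (padicValNat 2 (m.choose h) ≤ padicValNat 2 ((m - 1).choose (h - 1)) ∨
        padicValNat 2 (m.choose h) ≤ padicValNat 2 ((m - 1).choose h)) := by
  set t := Nat.log 2 h with ht
  set q := 2 ^ (t + 1) with hq
  have hhq : h < q := Nat.lt_pow_succ_log_self one_lt_two h
  have hq2 : 2 ≤ q := by
    have : (2:ℕ) ^ 1 ≤ 2 ^ (t+1) := Nat.pow_le_pow_right (by norm_num) (by omega)
    simpa using this
  have hqdvd : (2:ℕ) ∣ q := dvd_pow_self 2 (Nat.succ_ne_zero t)
  have hqk : q ≤ q * k := Nat.le_mul_of_pos_right q hk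
  have hq2k : (2:ℕ) ∣ q * k := hqdvd.mul_right k
  have hmodd : m % 2 = 1 := by omega
  have hhm : h < m := by omega
  have hm0 : m ≠ 0 := by omega
  set b := Nat.log 2 m + 1 with hb
  have hlogm : Nat.log 2 m < b := Nat.lt_succ_self _
  have hlogm1 : Nat.log 2 (m - 1) < b := by
    have := Nat.log_mono_right (show m - 1 ≤ m by omega) (b := 2)
    omega
  have hF : padicValNat 2 (m.choose h) =
      #(filter (fun i => 2 ^ i ≤ h % 2 ^ i + (m - h) % 2 ^ i) (Ico 1 b)) :=
    padicValNat_choose (le_of_lt hhm) hlogm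
  -- membership of t+1
  have hmem : (t + 1) ∈ filter (fun i => 2 ^ i ≤ h % 2 ^ i + (m - h) % 2 ^ i) (Ico 1 b) := by
    rw [mem_filter, mem_Ico]
    obtain ⟨k', rfl⟩ : ∃ k', k = k' + 1 := ⟨k - 1, by omega⟩
    have hmh : m - h = q * k' + (q + 1 - h) := by
      have : m = q * k' + q + 1 := by rw [hm]; ring
      omega
    have hmod : (m - h) % q = q + 1 - h := by
      rw [hmh, Nat.mul_add_mod]
      exact Nat.mod_eq_of_lt (by omega)
    constructor
    · constructor
      · omega
      · have : t + 1 ≤ Nat.log 2 m := by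
          rw [Nat.le_log_iff_pow_le one_lt_two hm0, ← hq]
          omega
        omega
    · rw [← hq, Nat.mod_eq_of_lt hhq, hmod]
      omega
  have h1 : 1 ≤ padicValNat 2 (m.choose h) := by
    rw [hF]
    exact Nat.one_le_iff_ne_zero.mpr (Finset.card_ne_zero_of_mem hmem)
  refine ⟨h1, ?_⟩
  rcases Nat.even_or_odd h with he | ho
  · left
    have hF' : padicValNat 2 ((m - 1).choose (h - 1)) =
        #(filter (fun i => 2 ^ i ≤ (h - 1) % 2 ^ i + ((m - 1) - (h - 1)) % 2 ^ i) (Ico 1 b)) :=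
      padicValNat_choose (by omega) hlogm1
    rw [hF, hF']
    apply Finset.card_le_card
    intro i hi
    rw [mem_filter, mem_Ico] at hi ⊢
    obtain ⟨⟨hi1, hib⟩, hcond⟩ := hi
    refine ⟨⟨hi1, hib⟩, ?_⟩
    set Q := 2 ^ i with hQ
    have hQ2 : (2:ℕ) ∣ Q := dvd_pow_self 2 (by omega)
    have hQ0 : 0 < Q := pow_pos (by norm_num) i
    have ha2 : h % Q % 2 = h % 2 := Nat.mod_mod_of_dvd h hQ2
    have hc2 : (m - h) % Q % 2 = (m - h) % 2 := Nat.mod_mod_of_dvd _ hQ2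
    have hQmod : Q % 2 = 0 := by omega
    have haQ : h % Q < Q := Nat.mod_lt _ hQ0
    have hcQ : (m - h) % Q < Q := Nat.mod_lt _ hQ0
    have he2 : h % 2 = 0 := Nat.even_iff.mp he
    have hsub : (h - 1) % Q = h % Q - 1 := by
      apply sub_one_mod_of_mod_pos hQ0
      omega
    have hmh : (m - 1) - (h - 1) = m - h := by omega
    rw [hmh, hsub]
    omega
  · right
    have hF' : padicValNat 2 ((m - 1).choose h) =
        #(filter (fun i => 2 ^ i ≤ h % 2 ^ i + ((m - 1) - h) % 2 ^ i) (Ico 1 b)) :=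
      padicValNat_choose (by omega) hlogm1
    rw [hF, hF']
    apply Finset.card_le_card
    intro i hi
    rw [mem_filter, mem_Ico] at hi ⊢
    obtain ⟨⟨hi1, hib⟩, hcond⟩ := hi
    refine ⟨⟨hi1, hib⟩, ?_⟩
    set Q := 2 ^ i with hQ
    have hQ2 : (2:ℕ) ∣ Q := dvd_pow_self 2 (by omega)
    have hQ0 : 0 < Q := pow_pos (by norm_num) i
    have ha2 : h % Q % 2 = h % 2 := Nat.mod_mod_of_dvd h hQ2
    have hc2 : (m - h) % Q % 2 = (m - h) % 2 := Nat.mod_mod_of_dvd _ hQ2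
    have hQmod : Q % 2 = 0 := by omega
    have haQ : h % Q < Q := Nat.mod_lt _ hQ0
    have hcQ : (m - h) % Q < Q := Nat.mod_lt _ hQ0
    have ho2 : h % 2 = 1 := Nat.odd_iff.mp ho
    have hsub : ((m - h) - 1) % Q = (m - h) % Q - 1 := by
      apply sub_one_mod_of_mod_pos hQ0
      omega
    have hmh : (m - 1) - h = (m - h) - 1 := by omega
    rw [hmh, hsub]
    omega


lemma card_filter_mem_powersetCard {M : Type*} [DecidableEq M] (A : Finset M) (j : ℕ)
    (hj : 1 ≤ j) {a : M} (ha : a ∈ A) :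
    #(filter (fun S => a ∈ S) (A.powersetCard j)) = (#A - 1).choose (j - 1) := by
  rw [← Finset.card_erase_of_mem ha, ← Finset.card_powersetCard]
  refine Finset.card_bij' (fun S _ => S.erase a) (fun T _ => insert a T) ?_ ?_ ?_ ?_
  · intro S hS
    rw [mem_filter, Finset.mem_powersetCard] at hS
    rw [Finset.mem_powersetCard]
    exact ⟨Finset.erase_subset_erase a hS.1.1, by
      rw [Finset.card_erase_of_mem hS.2, hS.1.2]⟩
  · intro T hT
    rw [Finset.mem_powersetCard] at hT
    have haT : a ∉ T := fun hc => (Finset.mem_erase.mp (hT.1 hc)).1 rfl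
    rw [mem_filter, Finset.mem_powersetCard]
    refine ⟨⟨Finset.insert_subset ha (hT.1.trans (Finset.erase_subset a A)), ?_⟩,
      Finset.mem_insert_self a T⟩
    rw [Finset.card_insert_of_notMem haT, hT.2]
    omega
  · intro S hS
    rw [mem_filter] at hS
    exact Finset.insert_erase hS.2
  · intro T hT
    rw [Finset.mem_powersetCard] at hT
    have haT : a ∉ T := fun hc => (Finset.mem_erase.mp (hT.1 hc)).1 rfl
    exact Finset.erase_insert haT

lemma sum_powersetCard_sum {M : Type*} [AddCommMonoid M] [DecidableEq M] (A : Finset M)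
    (j : ℕ) (hj : 1 ≤ j) :
    ∑ S ∈ A.powersetCard j, S.sum id = (#A - 1).choose (j - 1) • A.sum id := by
  have hstep : ∀ S ∈ A.powersetCard j, S.sum id = ∑ a ∈ A, if a ∈ S then a else 0 := by
    intro S hS
    rw [Finset.sum_ite_mem, Finset.inter_eq_right.mpr (Finset.mem_powersetCard.mp hS).1]
    rfl
  rw [Finset.sum_congr rfl hstep, Finset.sum_comm, Finset.smul_sum]
  apply Finset.sum_congr rfl
  intro a ha
  rw [← Finset.sum_filter, Finset.sum_const, card_filter_mem_powersetCard A j hj ha]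
  rfl

theorem restricted_sumset_card_lt_of_cyclic (k h m n : ℕ) (hk : 0 < k) (hh : 2 ≤ h)
    (hm : m = 2 ^ (Nat.log 2 h + 1) * k + 1) (hn : n = Nat.choose m h) :
    ∀ A : Finset (ZMod n), A.card = m → (restrictedSumset h A).card < n := by
  intro A hA
  -- basic arithmetic facts
  set t := Nat.log 2 h with ht
  have hhq : h < 2 ^ (t + 1) := Nat.lt_pow_succ_log_self one_lt_two h
  have hqk : 2 ^ (t + 1) ≤ 2 ^ (t + 1) * k := Nat.le_mul_of_pos_right _ hk
  have hhm : h < m := by omega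
  have hmh2 : 2 ≤ m - h := by omega
  have hn0 : 0 < n := by rw [hn]; exact Nat.choose_pos hhm.le
  haveI : NeZero n := ⟨hn0.ne'⟩
  -- the number-theoretic input
  obtain ⟨he1, hedisj⟩ := nt_main k h m hk hh hm
  set e := padicValNat 2 n with hee
  have hen : e = padicValNat 2 (m.choose h) := by rw [hee, hn]
  have he1' : 1 ≤ e := by omega
  have h2n : 2 ∣ n := by
    have h1 : (2:ℕ) ^ 1 ∣ 2 ^ e := pow_dvd_pow 2 he1'
    have h2 : (2:ℕ) ^ e ∣ n := pow_padicValNat_dvd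
    simpa using h1.trans h2
  set w := n / 2 with hw
  have hnw : n = 2 * w := by omega
  -- suppose for contradiction the cardinality is n
  have hPcard : #(A.powersetCard h) = n := by
    rw [Finset.card_powersetCard, hA, hn]
  have hle : (restrictedSumset h A).card ≤ n :=
    le_trans Finset.card_image_le (le_of_eq hPcard)
  rcases lt_or_eq_of_le hle with hlt | hEq
  · exact hlt
  exfalso
  have hinj : Set.InjOn (fun S : Finset (ZMod n) => S.sum id) ↑(A.powersetCard h) := by
    rw [← Finset.card_image_iff]
    rw [show ((A.powersetCard h).image fun S => S.sum id) = restrictedSumset h A from rfl,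
      hEq, hPcard]
  have himage : ((A.powersetCard h).image fun S => S.sum id) = Finset.univ := by
    apply Finset.eq_univ_of_card
    rw [show ((A.powersetCard h).image fun S => S.sum id) = restrictedSumset h A from rfl, hEq,
      ZMod.card]
  -- the universal sum U
  set U : ZMod n := ∑ g : ZMod n, g with hU
  set σ : ZMod n := A.sum id with hσ
  have hT : ∑ S ∈ A.powersetCard h, S.sum id = U := by
    rw [hU, ← himage]
    exact (Finset.sum_image (g := fun S : Finset (ZMod n) => S.sum id) (f := id)
      fun x hx y hy hxy => hinj hx hy hxy).symm
  have hEq1 : (m - 1).choose (h - 1) • σ = U := by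
    rw [← hT, sum_powersetCard_sum A h (by omega), hA]
  -- complement bijection
  have hcomp : ∑ S ∈ A.powersetCard (m - h), S.sum id
      = ∑ S ∈ A.powersetCard h, (σ - S.sum id) := by
    refine Finset.sum_nbij' (fun S => A \ S) (fun S => A \ S) ?_ ?_ ?_ ?_ ?_
    · intro S hS
      rw [Finset.mem_powersetCard] at hS ⊢
      refine ⟨Finset.sdiff_subset, ?_⟩
      rw [Finset.card_sdiff_of_subset hS.1, hA, hS.2]
      omega
    · intro S hS
      rw [Finset.mem_powersetCard] at hS ⊢
      refine ⟨Finset.sdiff_subset, ?_⟩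
      rw [Finset.card_sdiff_of_subset hS.1, hA, hS.2]
    · intro S hS
      rw [Finset.mem_powersetCard] at hS
      exact Finset.sdiff_sdiff_eq_self hS.1
    · intro S hS
      rw [Finset.mem_powersetCard] at hS
      exact Finset.sdiff_sdiff_eq_self hS.1
    · intro S hS
      rw [Finset.mem_powersetCard] at hS
      show S.sum id = σ - (A \ S).sum id
      rw [Finset.sum_sdiff_eq_sub hS.1, hσ]
      ring
  have hT' : ∑ S ∈ A.powersetCard (m - h), S.sum id = -U := by
    rw [hcomp, Finset.sum_sub_distrib, Finset.sum_const, hT, hPcard, nsmul_eq_mul,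
      ZMod.natCast_self, zero_mul, zero_sub]
  have hEq2 : (m - 1).choose h • σ = -U := by
    have h1 : m - h - 1 = (m - 1) - h := by omega
    rw [← hT', sum_powersetCard_sum A (m - h) (by omega), hA, h1,
      Nat.choose_symm (by omega : h ≤ m - 1)]
  -- compute U
  have hUval : U = -((w : ZMod n) * 1) := by
    have h1 : U = ∑ i ∈ Finset.range n, (i : ZMod n) := by
      rw [hU]
      refine Finset.sum_nbij' (fun g : ZMod n => g.val) (fun i : ℕ => (i : ZMod n)) ?_ ?_ ?_ ?_ ?_
      · intro g _; exact Finset.mem_range.mpr (ZMod.val_lt g)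
      · intro i _; exact Finset.mem_univ _
      · intro g _; exact ZMod.natCast_rightInverse g
      · intro i hi; exact ZMod.val_natCast_of_lt (Finset.mem_range.mp hi)
      · intro g _; exact (ZMod.natCast_rightInverse g).symm
    have hGauss : (∑ i ∈ Finset.range n, i) = w * (n - 1) := by
      apply Nat.eq_of_mul_eq_mul_right two_pos
      rw [Finset.sum_range_id_mul_two]
      rw [hnw]; ring
    rw [h1, ← Nat.cast_sum, hGauss, Nat.cast_mul, Nat.cast_sub (by omega : 1 ≤ n),
      ZMod.natCast_self, Nat.cast_one, zero_sub, mul_neg]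
  have hUval' : U = -(w : ZMod n) := by rw [hUval, mul_one]
  -- pick the good binomial coefficient
  have key : ∃ B : ℕ, 0 < B ∧ e ≤ padicValNat 2 B ∧
      ((B : ZMod n) * σ = -(w : ZMod n) ∨ (B : ZMod n) * σ = (w : ZMod n)) := by
    rcases hedisj with hd | hd
    · refine ⟨(m - 1).choose (h - 1), Nat.choose_pos (by omega), by omega, Or.inl ?_⟩
      rw [← nsmul_eq_mul, hEq1, hUval']
    · refine ⟨(m - 1).choose h, Nat.choose_pos (by omega), by omega, Or.inr ?_⟩
      rw [← nsmul_eq_mul, hEq2, hUval', neg_neg]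
  obtain ⟨B, hB0, hBe, hBeq⟩ := key
  have hdvdB : 2 ^ e ∣ B := (padicValNat_dvd_iff_le hB0.ne').mpr hBe
  have hdvdn : 2 ^ e ∣ n := pow_padicValNat_dvd
  haveI : NeZero (2 ^ e) := ⟨(pow_pos two_pos e).ne'⟩
  set φ := ZMod.castHom hdvdn (ZMod (2 ^ e)) with hφ
  have hB0' : (B : ZMod (2 ^ e)) = 0 := (ZMod.natCast_eq_zero_iff B (2 ^ e)).mpr hdvdB
  have hw0 : (w : ZMod (2 ^ e)) = 0 := by
    rcases hBeq with hq | hq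
    · have h3 := congrArg φ hq
      rw [map_mul, map_neg, map_natCast, map_natCast, hB0', zero_mul] at h3
      exact neg_eq_zero.mp h3.symm
    · have h3 := congrArg φ hq
      rw [map_mul, map_natCast, map_natCast, hB0', zero_mul] at h3
      exact h3.symm
  have hdw : 2 ^ e ∣ w := (ZMod.natCast_eq_zero_iff w (2 ^ e)).mp hw0
  have hdn : 2 ^ (e + 1) ∣ n := by
    obtain ⟨c, hc⟩ := hdw
    exact ⟨c, by rw [hnw, hc, pow_succ]; ring⟩
  exact pow_succ_padicValNat_not_dvd hn0.ne' hdn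
end

section
/- Let k be a positive integer, let h ≥ 2 be an integer, let m = 2^(⌊log₂ h⌋+1)·k + 1, and let n = C(m, h). Then for every subset A of the cyclic group ℤ/nℤ with |A| = m, the restricted (m−h)-fold sumset satisfies |(m−h)^∧A| < n; that is, ν^∧(ℤ_n, m, m−h) < min{n, C(m, m−h)}. -/
open Finset Pointwise

/-- Number of `r+1`-subsets of `A` containing a fixed element `a ∈ A`. -/
lemma aux_count_mem {α : Type*} [DecidableEq α] (A : Finset α) (r : ℕ) (a : α) (ha : a ∈ A) :
    ((A.powersetCard (r + 1)).filter fun S => a ∈ S).card = (A.card - 1).choose r := by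
  rw [← card_erase_of_mem ha, ← Finset.card_powersetCard]
  apply Finset.card_nbij' (fun S => S.erase a) (fun T => insert a T)
  · intro S hS
    simp only [mem_coe, mem_filter, mem_powersetCard] at hS
    obtain ⟨⟨hsub, hcard⟩, haS⟩ := hS
    refine mem_powersetCard.mpr ⟨?_, ?_⟩
    · exact Finset.erase_subset_erase a hsub
    · rw [card_erase_of_mem haS, hcard]
      omega
  · intro T hT
    rw [mem_coe, mem_powersetCard] at hT
    obtain ⟨hsub, hcard⟩ := hT
    have haT : a ∉ T := fun hx => (Finset.notMem_erase a A) (hsub hx)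
    refine mem_filter.mpr ⟨mem_powersetCard.mpr ⟨?_, ?_⟩, mem_insert_self a T⟩
    · intro x hx
      rcases mem_insert.mp hx with rfl | hx
      · exact ha
      · exact (Finset.erase_subset a A) (hsub hx)
    · rw [card_insert_of_notMem haT, hcard]
  · intro S hS
    simp only [mem_coe, mem_filter] at hS
    exact Finset.insert_erase hS.2
  · intro T hT
    rw [mem_coe, mem_powersetCard] at hT
    have haT : a ∉ T := fun hx => (Finset.notMem_erase a A) (hT.1 hx)
    exact Finset.erase_insert haT

/-- Sum of sums over all `r+1`-subsets. -/
lemma aux_sum_powersetCard {G : Type*} [AddCommMonoid G] [DecidableEq G] (A : Finset G) (r : ℕ) :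
    ∑ S ∈ A.powersetCard (r + 1), S.sum id = (A.card - 1).choose r • ∑ a ∈ A, a := by
  have h1 : ∀ S ∈ A.powersetCard (r + 1), S.sum id = ∑ a ∈ A, if a ∈ S then a else 0 := by
    intro S hS
    rw [← Finset.sum_filter, Finset.filter_mem_eq_inter,
      Finset.inter_eq_right.mpr (mem_powersetCard.mp hS).1]
    rfl
  rw [Finset.sum_congr rfl h1, Finset.sum_comm, Finset.smul_sum]
  refine Finset.sum_congr rfl fun a ha => ?_
  rw [← Finset.sum_filter, Finset.sum_const, aux_count_mem A r a ha]

/-- `n = C(m, h)` is even under the hypotheses. -/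
lemma aux_choose_even (k h m : ℕ) (_hk : 0 < k) (hh : 2 ≤ h)
    (hm : m = 2 ^ (Nat.log 2 h + 1) * k + 1) : 2 ∣ Nat.choose m h := by
  haveI : Fact (Nat.Prime 2) := ⟨Nat.prime_two⟩
  set j := Nat.log 2 h with hj
  have hmod := Choose.choose_modEq_choose_mul_prod_range_choose (p := 2) (n := m) (k := h) (j + 1)
  have hh0 : h ≠ 0 := by omega
  have hlow : 2 ^ j ≤ h := Nat.pow_log_le_self 2 hh0
  have hhi : h < 2 ^ (j + 1) := Nat.lt_pow_succ_log_self (by norm_num) h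
  have hj1 : 1 ≤ j := by
    rw [hj]
    exact Nat.le_log_of_pow_le (by norm_num) (by simpa using hh)
  have hterm : Nat.choose (m / 2 ^ j % 2) (h / 2 ^ j % 2) = 0 := by
    have h1 : h / 2 ^ j = 1 := by
      apply Nat.div_eq_of_lt_le
      · simpa using hlow
      · calc h < 2 ^ (j + 1) := hhi
          _ = (1 + 1) * 2 ^ j := by ring
    have h2 : m / 2 ^ j = 2 * k := by
      have : m = 1 + 2 ^ j * (2 * k) := by rw [hm]; ring
      rw [this, Nat.add_mul_div_left _ _ (by positivity : 0 < 2 ^ j),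
        Nat.div_eq_of_lt (Nat.one_lt_two_pow (by omega))]
      omega
    rw [h1, h2, Nat.mul_mod_right]
    rfl
  have hp : ∏ i ∈ Finset.range (j + 1), Nat.choose (m / 2 ^ i % 2) (h / 2 ^ i % 2) = 0 :=
    Finset.prod_eq_zero (Finset.self_mem_range_succ j) hterm
  rw [hp] at hmod
  have : ((Nat.choose m h : ℤ)) ≡ 0 [ZMOD 2] := by simpa using hmod
  have h2 : (2 : ℤ) ∣ (Nat.choose m h : ℤ) := Int.ModEq.dvd this.symm
  exact_mod_cast h2

theorem restricted_sumset_card_lt_of_cyclic' (k h m n : ℕ) (hk : 0 < k) (hh : 2 ≤ h)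
    (hm : m = 2 ^ (Nat.log 2 h + 1) * k + 1) (hn : n = Nat.choose m h) :
    ∀ A : Finset (ZMod n), A.card = m → (restrictedSumset (m - h) A).card < n := by
  -- basic facts
  have hhm : h ≤ m := by
    have : h < 2 ^ (Nat.log 2 h + 1) := Nat.lt_pow_succ_log_self (by norm_num) h
    have h2 : 2 ^ (Nat.log 2 h + 1) ≤ 2 ^ (Nat.log 2 h + 1) * k := Nat.le_mul_of_pos_right _ hk
    omega
  have hneven : 2 ∣ n := hn ▸ aux_choose_even k h m hk hh hm
  have hnpos : 0 < n := hn ▸ Nat.choose_pos hhm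
  have hn2 : 2 ≤ n := by omega
  haveI : NeZero n := ⟨by omega⟩
  have hmodd : m % 2 = 1 := by
    have : 2 ∣ 2 ^ (Nat.log 2 h + 1) * k := Dvd.dvd.mul_right (dvd_pow_self 2 (by omega)) k
    omega
  intro A hA
  by_contra hcon
  push_neg at hcon
  -- card of restricted (m-h) sumset equals that of restricted h sumset
  set σ : ZMod n := ∑ a ∈ A, a with hσ
  have hcompl : restrictedSumset (m - h) A = (restrictedSumset h A).image (fun x => σ - x) := by
    ext y
    simp only [restrictedSumset, Finset.mem_image, mem_powersetCard]
    constructor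
    · rintro ⟨S, ⟨hS, hcard⟩, rfl⟩
      refine ⟨(A \ S).sum id, ⟨A \ S, ⟨Finset.sdiff_subset, ?_⟩, rfl⟩, ?_⟩
      · rw [Finset.card_sdiff_of_subset hS, hA, hcard]; omega
      · have := Finset.sum_sdiff (f := id) hS
        simp only [id] at this ⊢
        rw [hσ, ← this]
        abel
    · rintro ⟨x, ⟨T, ⟨hT, hcard⟩, rfl⟩, rfl⟩
      refine ⟨A \ T, ⟨Finset.sdiff_subset, ?_⟩, ?_⟩
      · rw [Finset.card_sdiff_of_subset hT, hA, hcard]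
      · have := Finset.sum_sdiff (f := id) hT
        simp only [id] at this ⊢
        rw [hσ, ← this]
        abel
  have hcards : (restrictedSumset (m - h) A).card = (restrictedSumset h A).card := by
    rw [hcompl, Finset.card_image_of_injective _ (sub_right_injective)]
  rw [hcards] at hcon
  -- the h-fold restricted sumset has card ≤ n
  have hle : (restrictedSumset h A).card ≤ n := by
    calc (restrictedSumset h A).card ≤ (A.powersetCard h).card := Finset.card_image_le
    _ = n := by rw [Finset.card_powersetCard, hA, hn]
  have hcardeq : (restrictedSumset h A).card = n := le_antisymm hle hcon
  -- hence sums are injective on h-subsets and they cover everything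
  have hinj : Set.InjOn (fun S : Finset (ZMod n) => S.sum id) (A.powersetCard h) := by
    apply Finset.card_image_iff.mp
    rw [← restrictedSumset, hcardeq, Finset.card_powersetCard, hA, hn]
  have huniv : restrictedSumset h A = Finset.univ := by
    apply Finset.eq_univ_of_card
    rw [hcardeq, ZMod.card]
  have hkey : ∑ S ∈ A.powersetCard h, S.sum id = ∑ x : ZMod n, x := by
    have himg := Finset.sum_image (s := A.powersetCard h)
      (g := fun S : Finset (ZMod n) => S.sum id) (f := fun x : ZMod n => x)
      (fun x hx y hy hxy => hinj (Finset.mem_coe.mpr hx) (Finset.mem_coe.mpr hy) hxy)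
    rw [← himg]
    have : (A.powersetCard h).image (fun S : Finset (ZMod n) => S.sum id) = Finset.univ := huniv
    rw [this]
  -- compute both sides
  obtain ⟨r, hr⟩ : ∃ r, h = r + 1 := ⟨h - 1, by omega⟩
  have hLHS : ∑ S ∈ A.powersetCard h, S.sum id = (m - 1).choose r • σ := by
    rw [hr, aux_sum_powersetCard, hA, hσ]
  set t : ℕ := ∑ i ∈ Finset.range n, i with ht
  have hRHS : ∑ x : ZMod n, x = (t : ZMod n) := by
    have hbij : Function.Bijective (fun i : Fin n => ((i : ℕ) : ZMod n)) := by
      rw [Fintype.bijective_iff_injective_and_card]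
      constructor
      · intro i j hij
        have := congrArg ZMod.val hij
        rw [ZMod.val_cast_of_lt i.isLt, ZMod.val_cast_of_lt j.isLt] at this
        exact Fin.ext this
      · rw [ZMod.card, Fintype.card_fin]
    rw [← Fintype.sum_bijective _ hbij _ _ (fun i => rfl), ht, Nat.cast_sum,
      ← Fin.sum_univ_eq_sum_range (fun i => ((i : ℕ) : ZMod n))]
  -- the main equation
  have heq : ((m - 1).choose r : ZMod n) * σ = (t : ZMod n) := by
    rw [← hRHS, ← hkey, hLHS, nsmul_eq_mul]
  -- multiply by m
  have hmc : m * (m - 1).choose r = n * h := by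
    have h0 := Nat.add_one_mul_choose_eq (m - 1) r
    have hm1 : m - 1 + 1 = m := by omega
    rw [hm1, ← hr] at h0
    rw [h0, hn, mul_comm]
  have hzero : ((m * t : ℕ) : ZMod n) = 0 := by
    have : ((m : ZMod n)) * (((m - 1).choose r : ZMod n) * σ) = (m : ZMod n) * (t : ZMod n) := by
      rw [heq]
    rw [← mul_assoc, ← Nat.cast_mul, hmc] at this
    push_cast at this ⊢
    rw [ZMod.natCast_self, zero_mul, zero_mul] at this
    exact this.symm
  have hdvd : n ∣ m * t := (ZMod.natCast_eq_zero_iff _ _).mp hzero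
  -- final contradiction: n even, m odd, 2t = n(n-1)
  have hgauss : t * 2 = n * (n - 1) := Finset.sum_range_id_mul_two n
  obtain ⟨q, hq⟩ := hneven
  have hqpos : 0 < q := by omega
  have htval : t = q * (n - 1) := by
    have : t * 2 = (q * (n - 1)) * 2 := by rw [hgauss, hq]; ring
    omega
  obtain ⟨d, hd⟩ := hdvd
  rw [htval] at hd
  -- m * (q * (n-1)) = 2*q*d  →  m*(n-1) = 2*d, but m*(n-1) is odd
  have hcancel : m * (n - 1) = 2 * d := by
    have h2 : q * (m * (n - 1)) = q * (2 * d) := by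
      calc q * (m * (n - 1)) = m * (q * (n - 1)) := by ring
        _ = n * d := hd
        _ = 2 * q * d := by rw [hq]
        _ = q * (2 * d) := by ring
    exact Nat.eq_of_mul_eq_mul_left hqpos h2
  have hodd : (m * (n - 1)) % 2 = 1 := by
    have hn1 : (n - 1) % 2 = 1 := by omega
    rw [Nat.mul_mod, hmodd, hn1]
  omega
end

section
/- Let k be a nonnegative integer, let h ≥ 2 be an integer, and let m = 2^(⌊log₂ h⌋)·(4k + 3). Then ∑_{i=0}^{h} C(m−1, i−1) ≡ 0 (mod 2), where C(m−1, −1) = 0 (equivalently, ∑_{j=0}^{h−1} C(m−1, j) is even). -/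
open Finset Pointwise

lemma lucas_step (n j : ℕ) :
    Nat.choose n j % 2 = (Nat.choose (n % 2) (j % 2) * Nat.choose (n / 2) (j / 2)) % 2 := by
  haveI : Fact (Nat.Prime 2) := ⟨Nat.prime_two⟩
  exact Choose.choose_modEq_choose_mod_mul_choose_div_nat (p := 2)

lemma odd_part (L t j : ℕ) (ht : 1 ≤ t) (hj : j < 2 ^ L) :
    Nat.choose (2 ^ L * t - 1) j % 2 = 1 := by
  induction L generalizing j with
  | zero =>
    interval_cases j
    simp
  | succ L ih =>
    have h1 : 1 ≤ 2 ^ L * t := Nat.one_le_iff_ne_zero.mpr (by positivity)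
    have h2 : 2 ^ (L + 1) * t = 2 * (2 ^ L * t) := by ring
    have hn : 2 ^ (L + 1) * t - 1 = 2 * (2 ^ L * t - 1) + 1 := by omega
    rw [lucas_step, hn]
    have hmod : (2 * (2 ^ L * t - 1) + 1) % 2 = 1 := by omega
    have hdiv : (2 * (2 ^ L * t - 1) + 1) / 2 = 2 ^ L * t - 1 := by omega
    have hj' : j / 2 < 2 ^ L := by rw [pow_succ] at hj; omega
    rw [hmod, hdiv, Nat.mul_mod, ih (j / 2) hj']
    rcases Nat.mod_two_eq_zero_or_one j with h | h <;> simp [h]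

lemma even_part (L k j : ℕ) (h1 : 2 ^ L ≤ j) (h2 : j < 2 ^ (L + 1)) :
    Nat.choose (2 ^ L * (4 * k + 3) - 1) j % 2 = 0 := by
  induction L generalizing j with
  | zero =>
    interval_cases j
    simp [Nat.mul_mod]
  | succ L ih =>
    have hp : (0:ℕ) < 2 ^ L := Nat.pow_pos (by norm_num)
    have h1' : 1 ≤ 2 ^ L * (4 * k + 3) := Nat.one_le_iff_ne_zero.mpr (by positivity)
    have he : 2 ^ (L + 1) * (4 * k + 3) = 2 * (2 ^ L * (4 * k + 3)) := by ring
    have hn : 2 ^ (L + 1) * (4 * k + 3) - 1 = 2 * (2 ^ L * (4 * k + 3) - 1) + 1 := by omega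
    rw [lucas_step, hn]
    have hmod : (2 * (2 ^ L * (4 * k + 3) - 1) + 1) % 2 = 1 := by omega
    have hdiv : (2 * (2 ^ L * (4 * k + 3) - 1) + 1) / 2 = 2 ^ L * (4 * k + 3) - 1 := by omega
    have ha : 2 ^ L ≤ j / 2 := by rw [pow_succ] at h1; omega
    have hb : j / 2 < 2 ^ (L + 1) := by simp only [pow_succ] at h2 ⊢; omega
    rw [hmod, hdiv, Nat.mul_mod, ih (j / 2) ha hb]
    simp

theorem sum_choose_pred_even (k h m : ℕ) (hh : 2 ≤ h)
    (hm : m = 2 ^ (Nat.log 2 h) * (4 * k + 3)) :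
    2 ∣ ∑ j ∈ Finset.range h, Nat.choose (m - 1) j := by
  set L := Nat.log 2 h with hL
  have hle : 2 ^ L ≤ h := Nat.pow_log_le_self 2 (by omega)
  have hlt : h < 2 ^ (L + 1) := Nat.lt_pow_succ_log_self one_lt_two h
  have hL1 : 1 ≤ L := by
    rw [hL]
    exact Nat.le_log_of_pow_le one_lt_two (by simpa using hh)
  rw [Nat.dvd_iff_mod_eq_zero, Finset.sum_nat_mod]
  have hterm : ∀ j ∈ Finset.range h, Nat.choose (m - 1) j % 2 = if j < 2 ^ L then 1 else 0 := by
    intro j hj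
    rw [Finset.mem_range] at hj
    split_ifs with hcase
    · rw [hm]; exact odd_part L (4 * k + 3) j (by omega) hcase
    · rw [hm]; exact even_part L k j (by omega) (by omega)
  rw [Finset.sum_congr rfl hterm, ← Finset.sum_filter, Finset.sum_const, smul_eq_mul, mul_one]
  have : Finset.filter (fun j => j < 2 ^ L) (Finset.range h) = Finset.range (2 ^ L) := by
    ext x; simp [Finset.mem_filter, Finset.mem_range]; omega
  rw [this, Finset.card_range]
  have : 2 ^ L % 2 = 0 := by
    have : (2:ℕ) ∣ 2 ^ L := dvd_pow_self 2 (by omega)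
    omega
  omega
end

section
/- Let k be a nonnegative integer, let h ≥ 2 be an integer, and let m = 2^(⌊log₂ h⌋)·(4k + 3). Then ∑_{i=0}^{h} C(m, i) ≡ 2 (mod 4). -/
open Finset Pointwise

section SumChooseAux
open Polynomial


lemma four_eq_zero' : (4 : (ZMod 4)[X]) = 0 := by
  have h : ((4:ℕ) : (ZMod 4)[X]) = ((0:ℕ):(ZMod 4)[X]) := by
    rw [← Polynomial.C_eq_natCast, ← Polynomial.C_eq_natCast]
    congr 1
  simpa using h

lemma poly_id' (s : ℕ) : ((X+1 : (ZMod 4)[X]))^(4*s) = (X^2+1)^(2*s) := by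
  have h4 : ((X+1 : (ZMod 4)[X]))^4 = (X^2+1)^2 := by
    linear_combination (X + X^2 + X^3 : (ZMod 4)[X]) * four_eq_zero'
  rw [show 4*s = s*4 by ring, show 2*s = s*2 by ring, pow_mul', pow_mul', h4]

lemma coeff_aux' (n i : ℕ) :
    ((X^2+1 : (ZMod 4)[X])^n).coeff i
      = if 2 ∣ i then ((Nat.choose n (i/2) : ℕ) : ZMod 4) else 0 := by
  rw [add_pow]
  simp only [one_pow, mul_one, ← pow_mul, Polynomial.finset_sum_coeff,
    ← Polynomial.C_eq_natCast, Polynomial.coeff_mul_C, Polynomial.coeff_X_pow]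
  by_cases hi : 2 ∣ i
  · rw [if_pos hi]
    obtain ⟨t, rfl⟩ := hi
    rw [Finset.sum_eq_single t]
    · simp [Nat.mul_div_cancel_left]
    · intro b _ hb
      rw [if_neg (by omega), zero_mul]
    · intro ht
      rw [Finset.mem_range, not_lt] at ht
      rw [if_pos rfl, one_mul, Nat.choose_eq_zero_of_lt (by omega), Nat.cast_zero]
  · rw [if_neg hi]
    apply Finset.sum_eq_zero
    intro b _
    rw [if_neg (fun h => hi ⟨b, h⟩), zero_mul]

lemma choose_cast' (s i : ℕ) :
    ((Nat.choose (4*s) i : ℕ) : ZMod 4) =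
      if 2 ∣ i then ((Nat.choose (2*s) (i/2) : ℕ) : ZMod 4) else 0 := by
  rw [← Polynomial.coeff_X_add_one_pow (ZMod 4) (4*s) i, poly_id', coeff_aux']

lemma sum_halve' (s h : ℕ) :
    ((∑ i ∈ Finset.range (h+1), Nat.choose (4*s) i : ℕ) : ZMod 4) =
      ((∑ t ∈ Finset.range (h/2+1), Nat.choose (2*s) t : ℕ) : ZMod 4) := by
  push_cast
  rw [Finset.sum_congr rfl (fun i _ => choose_cast' s i)]
  have h1 : (∑ t ∈ Finset.range (h/2+1), ((Nat.choose (2*s) t : ℕ) : ZMod 4)) =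
      ∑ i ∈ (Finset.range (h/2+1)).map ⟨fun t => 2*t, fun a b hab => by dsimp at hab; omega⟩,
        (if 2 ∣ i then ((Nat.choose (2*s) (i/2) : ℕ) : ZMod 4) else 0) := by
    rw [Finset.sum_map]
    apply Finset.sum_congr rfl
    intro t _
    show _ = (if 2 ∣ 2*t then ((Nat.choose (2*s) (2*t/2) : ℕ) : ZMod 4) else 0)
    rw [Nat.mul_div_cancel_left t (by norm_num : 0 < 2)]
    rw [if_pos ⟨t, rfl⟩]
  rw [h1]
  symm
  apply Finset.sum_subset
  · intro x hx
    simp only [Finset.mem_map, Finset.mem_range, Function.Embedding.coeFn_mk] at hx ⊢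
    obtain ⟨t, ht, rfl⟩ := hx
    show 2 * t < h + 1
    omega
  · intro x hx hnx
    simp only [Finset.mem_map, Finset.mem_range, Function.Embedding.coeFn_mk] at hx hnx
    rw [if_neg]
    rintro ⟨t, rfl⟩
    exact hnx ⟨t, by omega, rfl⟩

lemma choose2_86' (k : ℕ) : Nat.choose (2*(4*k+3)) 2 % 4 = 3 := by
  rw [Nat.choose_two_right]
  have h1 : 2*(4*k+3) - 1 = 8*k+5 := by omega
  rw [h1]
  have h2 : 2*(4*k+3) * (8*k+5) = 2 * ((4*k+3)*(8*k+5)) := by ring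
  rw [h2, Nat.mul_div_cancel_left _ (by norm_num : 0 < 2)]
  rw [Nat.mul_mod, show (4*k+3) % 4 = 3 by omega, show (8*k+5) % 4 = 1 by omega]

lemma choose3_86' (k : ℕ) : Nat.choose (2*(4*k+3)) 3 % 4 = 0 := by
  have h := Nat.choose_succ_right_eq (2*(4*k+3)) 2
  have h3 : 2*(4*k+3) - 2 = 4*(2*k+1) := by omega
  rw [h3] at h
  have h4 : Nat.choose (2*(4*k+3)) 2 * (4*(2*k+1))
      = 4 * (Nat.choose (2*(4*k+3)) 2 * (2*k+1)) := by ring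
  rw [h4] at h
  norm_num at h
  set y := Nat.choose (2*(4*k+3)) 2 * (2*k+1) with hy
  omega

lemma key' : ∀ h, 2 ≤ h → ∀ k,
    ((∑ i ∈ Finset.range (h+1), Nat.choose (2^(Nat.log 2 h)*(4*k+3)) i : ℕ) : ZMod 4) = 2 := by
  intro h
  induction h using Nat.strong_induction_on with
  | _ h IH =>
    intro hh k
    by_cases hb : h < 4
    · have hmod : (∑ i ∈ Finset.range (h+1),
          Nat.choose (2^(Nat.log 2 h)*(4*k+3)) i) % 4 = 2 := by
        interval_cases h
        · rw [Nat.log_eq_of_pow_le_of_lt_pow (m := 1) (by norm_num) (by norm_num), pow_one]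
          have h2 := choose2_86' k
          simp only [Finset.sum_range_succ, Finset.sum_range_zero, Nat.choose_zero_right,
            Nat.choose_one_right]
          omega
        · rw [Nat.log_eq_of_pow_le_of_lt_pow (m := 1) (by norm_num) (by norm_num), pow_one]
          have h2 := choose2_86' k
          have h3 := choose3_86' k
          simp only [Finset.sum_range_succ, Finset.sum_range_zero, Nat.choose_zero_right,
            Nat.choose_one_right]
          omega
      calc ((∑ i ∈ Finset.range (h+1), Nat.choose (2^(Nat.log 2 h)*(4*k+3)) i : ℕ) : ZMod 4)
          = (((∑ i ∈ Finset.range (h+1), Nat.choose (2^(Nat.log 2 h)*(4*k+3)) i) % 4 : ℕ) : ZMod 4) := by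
            rw [ZMod.natCast_mod]
        _ = 2 := by rw [hmod]; norm_num
    · push_neg at hb
      have hL : 2 ≤ Nat.log 2 h := by
        rw [Nat.le_log_iff_pow_le (by norm_num) (by omega)]; omega
      have hlog : Nat.log 2 (h/2) = Nat.log 2 h - 1 := Nat.log_div_base 2 h
      have hm : 2^(Nat.log 2 h)*(4*k+3) = 4 * (2^(Nat.log 2 h - 2)*(4*k+3)) := by
        have e : (2:ℕ)^(Nat.log 2 h) = 4 * 2^(Nat.log 2 h - 2) := by
          rw [show (4:ℕ) = 2^2 from rfl, ← pow_add]
          congr 1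
          omega
        rw [e, mul_assoc]
      have h2s : 2 * (2^(Nat.log 2 h - 2)*(4*k+3)) = 2^(Nat.log 2 (h/2))*(4*k+3) := by
        have e : (2:ℕ) * 2^(Nat.log 2 h - 2) = 2^(Nat.log 2 h - 1) := by
          rw [← pow_succ']
          congr 1
          omega
        rw [hlog, ← mul_assoc, e]
      rw [hm, sum_halve', h2s]
      exact IH (h/2) (by omega) (by omega) k


end SumChooseAux

theorem sum_choose_mod_four (k h m : ℕ) (hh : 2 ≤ h)
    (hm : m = 2 ^ (Nat.log 2 h) * (4 * k + 3)) :
    (∑ i ∈ Finset.range (h + 1), Nat.choose m i) % 4 = 2 := by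
  subst hm
  have h1 := key' h hh k
  have h2 := ZMod.natCast_mod (∑ i ∈ Finset.range (h + 1),
    Nat.choose (2 ^ (Nat.log 2 h) * (4 * k + 3)) i) 4
  rw [h1] at h2
  have h3 : (∑ i ∈ Finset.range (h + 1),
      Nat.choose (2 ^ (Nat.log 2 h) * (4 * k + 3)) i) % 4 < 4 := Nat.mod_lt _ (by norm_num)
  set r := (∑ i ∈ Finset.range (h + 1), Nat.choose (2 ^ (Nat.log 2 h) * (4 * k + 3)) i) % 4
  interval_cases r
  · simp at h2; exact absurd h2.symm (by decide)
  · exact absurd h2.symm (by decide)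
  · rfl
  · exact absurd h2.symm (by decide)
end

section
/- Let k be a nonnegative integer, let h ≥ 2 be an integer, let m = 2^(⌊log₂ h⌋)·(4k + 3), and let n = ∑_{i=0}^{h} C(m, i). Then for every subset A of the cyclic group ℤ/nℤ with |A| = m, the restricted [0,h]-fold sumset satisfies |[0,h]^∧A| < n; that is, ν^∧(ℤ_n, m, [0,h]) < min{n, ∑_{i=0}^{h} C(m, i)}. -/
open Finset Pointwise

set_option linter.unusedSectionVars false


open Finset

def dsum (n : ℕ) : ℕ := (Nat.digits 2 n).sum

lemma dsum_split {a q r : ℕ} (hr : r < 2 ^ a) : dsum (2 ^ a * q + r) = dsum q + dsum r := by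
  rcases Nat.eq_zero_or_pos q with rfl | hq
  · simp [dsum]
  have hlen : (Nat.digits 2 r).length ≤ a := by
    rcases Nat.eq_zero_or_pos r with rfl | hr0
    · simp
    rw [Nat.digits_len 2 r one_lt_two hr0.ne']
    have := (Nat.log_lt_iff_lt_pow one_lt_two hr0.ne').mpr hr
    omega
  have h2 := Nat.digits_append_zeroes_append_digits (b := 2) (k := a - (Nat.digits 2 r).length)
    (m := q) (n := r) one_lt_two hq
  rw [Nat.add_sub_cancel' hlen] at h2
  have h3 : dsum (r + 2 ^ a * q) = dsum r + dsum q := by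
    unfold dsum
    rw [← h2]
    simp
  rw [add_comm (2 ^ a * q) r, h3, add_comm]

lemma dsum_two_mul (b : ℕ) : dsum (2 * b) = dsum b := by
  have := dsum_split (a := 1) (q := b) (r := 0) (by norm_num)
  simpa [dsum] using this

lemma dsum_two_mul_add_one (b : ℕ) : dsum (2 * b + 1) = dsum b + 1 := by
  have := dsum_split (a := 1) (q := b) (r := 1) (by norm_num)
  simpa [dsum] using this

lemma dsum_pow_sub_one (t : ℕ) : dsum (2 ^ t - 1) = t := by
  induction t with
  | zero => simp [dsum]
  | succ t ih =>
    have h : 2 ^ (t + 1) - 1 = 2 * (2 ^ t - 1) + 1 := by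
      have := Nat.one_le_two_pow (n := t); omega
    rw [h, dsum_two_mul_add_one, ih]

lemma dsum_compl {t r : ℕ} (hr : r < 2 ^ t) : dsum r + dsum (2 ^ t - 1 - r) = t := by
  induction t generalizing r with
  | zero => interval_cases r; simp [dsum]
  | succ t ih =>
    rcases Nat.even_or_odd r with ⟨q, hq⟩ | ⟨q, hq⟩
    · subst hq
      have hq2 : q < 2 ^ t := by have := Nat.pow_succ 2 t; omega
      have h1 : dsum (q + q) = dsum q := by rw [← two_mul]; exact dsum_two_mul q
      have h2 : 2 ^ (t + 1) - 1 - (q + q) = 2 * (2 ^ t - 1 - q) + 1 := by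
        have := Nat.one_le_two_pow (n := t)
        have : 2 ^ (t+1) = 2 * 2 ^ t := by ring
        omega
      rw [h1, h2, dsum_two_mul_add_one]
      have := ih hq2
      omega
    · subst hq
      have hq2 : q < 2 ^ t := by have h2 : 2 ^ (t+1) = 2 * 2 ^ t := by ring
                                 omega
      have h1 : dsum (2 * q + 1) = dsum q + 1 := dsum_two_mul_add_one q
      have h2 : 2 ^ (t + 1) - 1 - (2 * q + 1) = 2 * (2 ^ t - 1 - q) := by
        have h3 : 2 ^ (t+1) = 2 * 2 ^ t := by ring
        have := Nat.one_le_two_pow (n := t)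
        omega
      rw [h1, h2, dsum_two_mul]
      have := ih hq2
      omega

lemma dsum_succ_le (a : ℕ) : dsum (a + 1) ≤ dsum a + 1 := by
  induction a using Nat.strong_induction_on with
  | _ a ih =>
    rcases Nat.even_or_odd a with ⟨b, hb⟩ | ⟨b, hb⟩
    · subst hb
      have : dsum (b + b + 1) = dsum b + 1 := by
        have := dsum_two_mul_add_one b; rw [two_mul] at this; exact this
      have h2 : dsum (b + b) = dsum b := by
        have := dsum_two_mul b; rw [two_mul] at this; exact this
      omega
    · subst hb
      have h1 : dsum (2 * b + 1 + 1) = dsum (b + 1) := by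
        have : 2 * b + 1 + 1 = 2 * (b + 1) := by ring
        rw [this, dsum_two_mul]
      have h2 := dsum_two_mul_add_one b
      have h3 : dsum (b + 1) ≤ dsum b + 1 := by
        rcases Nat.eq_zero_or_pos b with rfl | hb0
        · simp [dsum]
        exact ih b (by omega)
      omega

lemma padicVal_choose_eq {N j : ℕ} (hj : j ≤ N) :
    padicValNat 2 (N.choose j) = dsum j + dsum (N - j) - dsum N := by
  have := sub_one_mul_padicValNat_choose_eq_sub_sum_digits (p := 2) hj
  simpa [dsum] using this

lemma core_parity (k h m : ℕ) (hh : 2 ≤ h)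
    (hm : m = 2 ^ Nat.log 2 h * (4 * k + 3)) :
    2 ∣ (∑ i ∈ Finset.range h, Nat.choose (m - 1) i) ∧ Nat.choose (m - 1) h % 4 = 2 := by
  set t := Nat.log 2 h with ht
  have ht1 : 1 ≤ t := by
    rw [ht]
    exact (Nat.le_log_iff_pow_le one_lt_two (by omega)).mpr (by simpa using hh)
  have hTh : 2 ^ t ≤ h := Nat.pow_log_le_self 2 (by omega)
  have hhT : h < 2 ^ (t + 1) := Nat.lt_pow_succ_log_self one_lt_two h
  have hpow : 2 ^ (t + 1) = 2 * 2 ^ t := by ring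
  have hT1 : 1 ≤ 2 ^ t := Nat.one_le_two_pow
  set r := h - 2 ^ t with hr
  have hrT : r < 2 ^ t := by omega
  have hhr : h = 2 ^ t + r := by omega
  -- digit sums
  have hsh : dsum h = 1 + dsum r := by
    rw [hhr]
    have := dsum_split (a := t) (q := 1) (r := r) hrT
    simpa [dsum] using this
  have hcompl := dsum_compl hrT
  have hm1 : m - 1 = 2 ^ (t + 1) * (2 * k + 1) + (2 ^ t - 1) := by
    rw [hm]; rw [hpow]; ring_nf; omega
  have hsm1 : dsum (m - 1) = dsum k + 1 + t := by
    rw [hm1, dsum_split (by omega), dsum_pow_sub_one]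
    have : dsum (2 * k + 1) = dsum k + 1 := dsum_two_mul_add_one k
    omega
  have hm1h : m - 1 - h = 2 ^ t * (4 * k + 1) + (2 ^ t - 1 - r) := by
    rw [hm, hhr, hpow] at *
    have h4 : 2 ^ t * (4 * k + 3) = 2 ^ t * (4 * k + 1) + 2 ^ t + 2 ^ t := by ring
    omega
  have hs4k1 : dsum (4 * k + 1) = dsum k + 1 := by
    have := dsum_split (a := 2) (q := k) (r := 1) (by norm_num)
    have h4 : 2 ^ 2 * k + 1 = 4 * k + 1 := by ring
    rw [h4] at this
    simpa [dsum] using this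
  have hsm1h : dsum (m - 1 - h) = dsum k + 1 + (t - dsum r) ∧ dsum r ≤ t := by
    constructor
    · rw [hm1h, dsum_split (by omega), hs4k1]
      omega
    · omega
  have hhm1 : h ≤ m - 1 := by
    have : 2 * 2 ^ t ≤ 2 ^ t * (4 * k + 3) := by nlinarith
    omega
  have hsm2 : dsum (m - 2) = dsum k + t := by
    have hm2 : m - 2 = 2 ^ (t + 1) * (2 * k + 1) + (2 ^ t - 2) := by omega
    have hT2 : 2 ^ t - 2 = 2 * (2 ^ (t - 1) - 1) := by
      have : 2 ^ t = 2 * 2 ^ (t - 1) := by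
        conv_lhs => rw [show t = (t - 1) + 1 by omega]
        ring
      omega
    rw [hm2, dsum_split (by omega), hT2, dsum_two_mul, dsum_pow_sub_one]
    have : dsum (2 * k + 1) = dsum k + 1 := dsum_two_mul_add_one k
    omega
  -- valuation of choose (m-1) h equals 1
  have hv1 : padicValNat 2 ((m - 1).choose h) = 1 := by
    rw [padicVal_choose_eq hhm1, hsh, hsm1, hsm1h.1]
    have := hsm1h.2
    omega
  have hchoose_pos : 0 < (m - 1).choose h := Nat.choose_pos hhm1
  have hmod4 : (m - 1).choose h % 4 = 2 := by
    have hdvd : 2 ^ 1 ∣ (m - 1).choose h := by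
      have h2 := pow_padicValNat_dvd (p := 2) (n := (m - 1).choose h)
      rwa [hv1] at h2
    have hndvd : ¬ 2 ^ 2 ∣ (m - 1).choose h := by
      have := pow_succ_padicValNat_not_dvd (p := 2) (n := (m - 1).choose h) hchoose_pos.ne'
      rwa [hv1] at this
    simp only [pow_one, pow_two] at hdvd hndvd
    omega
  refine ⟨?_, hmod4⟩
  -- parity of the partial sum: ≡ choose (m-2) (h-1) mod 2
  have hsum_mod : ∀ N j : ℕ, (∑ i ∈ Finset.range (j + 1), Nat.choose (N + 1) i) % 2
      = Nat.choose N j % 2 := by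
    intro N j
    induction j with
    | zero => simp
    | succ j ihj =>
      rw [Finset.sum_range_succ, Nat.choose_succ_succ]
      simp only [Nat.succ_eq_add_one] at *
      omega
  have hm2' : m - 1 = (m - 2) + 1 := by omega
  have hh' : h = (h - 1) + 1 := by omega
  have hq := hsum_mod (m - 2) (h - 1)
  rw [← hm2', ← hh'] at hq
  -- show choose (m-2) (h-1) is even
  have heven : Nat.choose (m - 2) (h - 1) % 2 = 0 := by
    have hle : h - 1 ≤ m - 2 := by omega
    have hval := padicVal_choose_eq hle
    have hmh : m - 2 - (h - 1) = m - 1 - h := by omega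
    rw [hmh, hsm1h.1, hsm2] at hval
    have hv_ge : 1 ≤ padicValNat 2 ((m - 2).choose (h - 1)) := by
      rcases Nat.eq_zero_or_pos r with hr0 | hr0
      · have hsh1 : dsum (h - 1) = t := by
          have : h - 1 = 2 ^ t - 1 := by omega
          rw [this, dsum_pow_sub_one]
        have hdr0 : dsum r = 0 := by rw [hr0]; simp [dsum]
        rw [hsh1, hdr0] at hval
        omega
      · have hsh1 : dsum (h - 1) = 1 + dsum (r - 1) := by
          have hh1 : h - 1 = 2 ^ t * 1 + (r - 1) := by omega
          rw [hh1, dsum_split (by omega)]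
          simp [dsum]
        have hstep : dsum r ≤ dsum (r - 1) + 1 := by
          have := dsum_succ_le (r - 1)
          rw [show r - 1 + 1 = r by omega] at this
          exact this
        rw [hsh1] at hval
        have := hsm1h.2
        omega
    have hdvd : 2 ∣ (m - 2).choose (h - 1) := by
      have := pow_padicValNat_dvd (p := 2) (n := (m - 2).choose (h - 1))
      exact dvd_trans (dvd_trans (dvd_of_eq (pow_one 2).symm) (pow_dvd_pow 2 hv_ge)) this
    omega
  omega


open Finset

lemma sum_choose_succ (M j : ℕ) :
    ∑ i ∈ Finset.range (j + 1), (M + 1).choose i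
      = 2 * (∑ i ∈ Finset.range j, M.choose i) + M.choose j := by
  induction j with
  | zero => simp
  | succ j ih =>
    rw [Finset.sum_range_succ, ih, Nat.choose_succ_succ, Finset.sum_range_succ]
    ring

section main
variable {n : ℕ} [NeZero n]

lemma sum_univ_zmod : (∑ x : ZMod n, x) = ((∑ i ∈ Finset.range n, i : ℕ) : ZMod n) := by
  rw [Nat.cast_sum]
  apply Finset.sum_bij' (i := fun (x : ZMod n) _ => x.val)
    (j := fun (i : ℕ) _ => (i : ZMod n))
  · intro x _
    exact Finset.mem_range.mpr (ZMod.val_lt x)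
  · intro i _
    exact Finset.mem_univ _
  · intro x _
    exact ZMod.natCast_rightInverse x
  · intro i hi
    exact ZMod.val_natCast_of_lt (Finset.mem_range.mp hi)
  · intro x _
    exact (ZMod.natCast_rightInverse x).symm

end main


open Finset

section count
variable {G : Type*} [AddCommMonoid G] [DecidableEq G]

lemma mem_D_iff {h : ℕ} {A S : Finset G} :
    S ∈ (Finset.range (h + 1)).biUnion (fun s => A.powersetCard s) ↔ S ⊆ A ∧ S.card ≤ h := by
  simp only [Finset.mem_biUnion, Finset.mem_range, Finset.mem_powersetCard]
  constructor
  · rintro ⟨s, hs, hSA, rfl⟩; exact ⟨hSA, by omega⟩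
  · rintro ⟨hSA, hc⟩; exact ⟨S.card, by omega, hSA, rfl⟩

lemma count_mem {h m : ℕ} {A : Finset G} (hA : A.card = m) (hh : 1 ≤ h) {a : G} (ha : a ∈ A) :
    (((Finset.range (h + 1)).biUnion (fun s => A.powersetCard s)).filter
      (fun S => a ∈ S)).card = ∑ i ∈ Finset.range h, (m - 1).choose i := by
  have hD' : (((Finset.range h).biUnion (fun s => (A.erase a).powersetCard s)).card)
      = ∑ i ∈ Finset.range h, (m - 1).choose i := by
    rw [Finset.card_biUnion]
    · apply Finset.sum_congr rfl
      intro i _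
      rw [Finset.card_powersetCard, Finset.card_erase_of_mem ha, hA]
    · intro x _ y _ hxy
      apply Finset.disjoint_left.mpr
      intro S hSx hSy
      rw [Finset.mem_powersetCard] at hSx hSy
      exact hxy (hSx.2.symm.trans hSy.2)
  rw [← hD']
  refine Finset.card_bij' (fun S _ => S.erase a) (fun T _ => insert a T) ?hi ?hj ?left ?right
  case hi =>
    intro S hS
    rw [Finset.mem_filter, mem_D_iff] at hS
    obtain ⟨⟨hSA, hSc⟩, haS⟩ := hS
    simp only [Finset.mem_biUnion, Finset.mem_range, Finset.mem_powersetCard]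
    refine ⟨S.card - 1, by omega, Finset.erase_subset_erase a hSA, ?_⟩
    · rw [Finset.card_erase_of_mem haS]
  case hj =>
    intro T hT
    simp only [Finset.mem_biUnion, Finset.mem_range, Finset.mem_powersetCard] at hT
    obtain ⟨s, hs, hTA, hTc⟩ := hT
    have haT : a ∉ T := fun hmem => (Finset.mem_erase.mp (hTA hmem)).1 rfl
    rw [Finset.mem_filter, mem_D_iff]
    refine ⟨⟨?_, ?_⟩, Finset.mem_insert_self a T⟩
    · intro x hx
      rcases Finset.mem_insert.mp hx with rfl | hx
      · exact ha
      · exact (Finset.erase_subset a A) (hTA hx)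
    · rw [Finset.card_insert_of_notMem haT]; omega
  case left =>
    intro S hS
    rw [Finset.mem_filter] at hS
    exact Finset.insert_erase hS.2
  case right =>
    intro T hT
    simp only [Finset.mem_biUnion, Finset.mem_range, Finset.mem_powersetCard] at hT
    obtain ⟨s, hs, hTA, hTc⟩ := hT
    have haT : a ∉ T := fun hmem => (Finset.mem_erase.mp (hTA hmem)).1 rfl
    exact Finset.erase_insert haT

end count

theorem restricted_interval_sumset_card_lt_of_cyclic (k h m n : ℕ) (hh : 2 ≤ h)
    (hm : m = 2 ^ (Nat.log 2 h) * (4 * k + 3))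
    (hn : n = ∑ i ∈ Finset.range (h + 1), Nat.choose m i) :
    ∀ A : Finset (ZMod n), A.card = m → (restrictedIntervalSumset h A).card < n := by
  intro A hA
  obtain ⟨hCdvd, hmod4⟩ := core_parity k h m hh hm
  set C := ∑ i ∈ Finset.range h, Nat.choose (m - 1) i with hC
  have hm1 : 1 ≤ m := by
    have : 1 ≤ 2 ^ Nat.log 2 h := Nat.one_le_two_pow
    nlinarith [hm]
  have hnid : n = 2 * C + Nat.choose (m - 1) h := by
    rw [hn, hC]
    have := sum_choose_succ (m - 1) h
    rw [show m - 1 + 1 = m by omega] at this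
    exact this
  have hn4 : n % 4 = 2 := by omega
  have hn2 : 2 ≤ n := by omega
  haveI : NeZero n := ⟨by omega⟩
  classical
  set D : Finset (Finset (ZMod n)) :=
    (Finset.range (h + 1)).biUnion (fun s => A.powersetCard s) with hD
  have hDcard : D.card = n := by
    have h1 : D.card = ∑ i ∈ Finset.range (h + 1), m.choose i := by
      rw [hD, Finset.card_biUnion]
      · exact Finset.sum_congr rfl fun i _ => by rw [Finset.card_powersetCard, hA]
      · intro x _ y _ hxy
        apply Finset.disjoint_left.mpr
        intro S hSx hSy
        rw [Finset.mem_powersetCard] at hSx hSy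
        exact hxy (hSx.2.symm.trans hSy.2)
    omega
  have himg : restrictedIntervalSumset h A = D.image (fun S => S.sum id) := by
    rw [hD, Finset.biUnion_image]
    rfl
  have hle : (restrictedIntervalSumset h A).card ≤ n := by
    rw [himg]
    exact le_of_le_of_eq Finset.card_image_le hDcard
  rcases lt_or_eq_of_le hle with hlt | heq
  · exact hlt
  exfalso
  -- the sum map is a bijection from D onto ZMod n
  have heq' : (D.image (fun S => S.sum id)).card = D.card := by
    rw [← himg, heq, hDcard]
  have hinj : Set.InjOn (fun S : Finset (ZMod n) => S.sum id) D :=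
    Finset.card_image_iff.mp heq'
  have huniv : D.image (fun S => S.sum id) = Finset.univ := by
    apply Finset.eq_univ_of_card
    rw [heq', hDcard, ZMod.card n]
  have hsum : (∑ x : ZMod n, x) = ∑ S ∈ D, S.sum id := by
    rw [← huniv]
    exact Finset.sum_image (fun x hx y hy hxy => hinj hx hy hxy)
  -- compute the right hand side
  have hrhs : ∑ S ∈ D, S.sum id = C • (A.sum id) := by
    have h1 : ∀ S ∈ D, S.sum id = ∑ x ∈ A, (if x ∈ S then x else 0) := by
      intro S hS
      have hSA : S ⊆ A := (mem_D_iff.mp hS).1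
      rw [← Finset.sum_filter]
      apply Finset.sum_congr _ (fun x _ => rfl)
      rw [Finset.filter_mem_eq_inter, Finset.inter_eq_right.mpr hSA]
    rw [Finset.sum_congr rfl h1, Finset.sum_comm]
    have h2 : ∀ x ∈ A, (∑ S ∈ D, if x ∈ S then x else 0) = C • x := by
      intro x hx
      rw [← Finset.sum_filter, Finset.sum_const]
      congr 1
      rw [hD, hC]
      exact count_mem hA (by omega) hx
    rw [Finset.sum_congr rfl h2, ← Finset.smul_sum]
    rfl
  have key : (∑ x : ZMod n, x) = C • A.sum id := hsum.trans hrhs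
  have h2n : (2 : ℕ) ∣ n := by omega
  let φ : ZMod n →+* ZMod 2 := ZMod.castHom h2n (ZMod 2)
  have hL : φ (∑ x : ZMod n, x) = ((∑ i ∈ Finset.range n, i : ℕ) : ZMod 2) := by
    rw [sum_univ_zmod, map_natCast]
  have hR : φ (C • A.sum id) = 0 := by
    rw [map_nsmul, nsmul_eq_mul]
    have hc0 : ((C : ℕ) : ZMod 2) = 0 := (ZMod.natCast_eq_zero_iff C 2).mpr hCdvd
    rw [hc0, zero_mul]
  have hG : ((∑ i ∈ Finset.range n, i : ℕ) : ZMod 2) = 0 := by rw [← hL, key, hR]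
  have hGdvd : 2 ∣ ∑ i ∈ Finset.range n, i := (ZMod.natCast_eq_zero_iff _ 2).mp hG
  have hGauss : (∑ i ∈ Finset.range n, i) * 2 = n * (n - 1) := Finset.sum_range_id_mul_two n
  set v := n / 2 with hv
  have hnv : n = 2 * v ∧ v % 2 = 1 := by omega
  have hX : n * (n - 1) = (v * (n - 1)) * 2 := by rw [hnv.1]; ring
  have hGeq : (∑ i ∈ Finset.range n, i) = v * (n - 1) := by omega
  have hodd : (v * (n - 1)) % 2 = 1 :=
    Nat.odd_iff.mp (Nat.odd_mul.mpr ⟨Nat.odd_iff.mpr hnv.2, Nat.odd_iff.mpr (by omega)⟩)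
  omega
end

section
/- Let k be a nonnegative integer, let h ≥ 2 be an integer, and let m = 2^(⌊log₂ h⌋)·(4k + 3). Then the binomial coefficient C(m−1, h) satisfies C(m−1, h) ≡ 2 (mod 4). -/
open Finset Pointwise

theorem choose_pred_mod_four (k h m : ℕ) (hh : 2 ≤ h)
    (hm : m = 2 ^ (Nat.log 2 h) * (4 * k + 3)) :
    Nat.choose (m - 1) h % 4 = 2 := by
  have inst : Fact (Nat.Prime 2) := ⟨Nat.prime_two⟩
  set L := Nat.log 2 h with hL
  set a := 2 ^ L with ha
  have ha1 : 1 ≤ a := Nat.one_le_pow _ _ (by norm_num)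
  have h1 : a ≤ h := Nat.pow_log_le_self 2 (show h ≠ 0 by omega)
  have h2 : h < 2 * a := by
    have := Nat.lt_pow_succ_log_self (b := 2) (by norm_num) h
    rw [pow_succ, ← hL, ← ha] at this; omega
  set r := h - a with hr
  have hhr : h = a + r := by omega
  have hra : r < a := by omega
  set t := a * k with ht
  have hmt : m = 4 * t + 3 * a := by rw [hm, ht]; ring
  set n := m - 1 with hn
  have hn1 : n + 1 = 4 * t + 3 * a := by omega
  have hkn : h ≤ n := by omega
  set e := 2 * a - 1 - r with he
  have hee : e + r + 1 = 2 * a := by omega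
  have hnh : n - h = 4 * t + e := by omega
  set b := Nat.log 2 n + 1 with hb
  have hLb : L + 1 < b := by
    have : 2 ^ (L + 1) ≤ n := by rw [pow_succ]; omega
    have := (Nat.le_log_iff_pow_le one_lt_two (by omega)).mpr this
    omega
  have hval : padicValNat 2 (Nat.choose n h) = 1 := by
    rw [padicValNat_choose hkn (Nat.lt_succ_self _)]
    have hfilt : ((Finset.Ico 1 b).filter
        fun i => 2 ^ i ≤ h % 2 ^ i + (n - h) % 2 ^ i) = {L + 1} := by
      ext i
      simp only [Finset.mem_filter, Finset.mem_Ico, Finset.mem_singleton]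
      constructor
      · rintro ⟨⟨hi1, hi2⟩, hcond⟩
        by_contra hne
        rcases lt_or_gt_of_ne hne with hlt | hgt
        · -- i ≤ L : no carry
          have hiL : i ≤ L := by omega
          have hdvd : 2 ^ i ∣ a := pow_dvd_pow 2 hiL
          have hdvd' : 2 ^ i ∣ n + 1 := by
            rw [hn1]
            exact Dvd.dvd.add ((hdvd.mul_right k).mul_left 4) (hdvd.mul_left 3)
          set P := 2 ^ i with hP
          have hP2 : 2 ≤ P := by
            calc 2 = 2 ^ 1 := rfl
            _ ≤ P := Nat.pow_le_pow_right (by norm_num) hi1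
          obtain ⟨c, hc⟩ := hdvd'
          have hc1 : 1 ≤ c := Nat.pos_of_ne_zero fun h0 => by simp [h0] at hc
          have hcc : P * c = P * (c - 1) + P := by
            rw [← Nat.mul_succ]; congr 1; omega
          have hnP : n % P = P - 1 := by
            have : n = P * (c - 1) + (P - 1) := by omega
            rw [this, Nat.mul_add_mod, Nat.mod_eq_of_lt (by omega)]
          have hsum : (h % P + (n - h) % P) % P = P - 1 := by
            rw [← Nat.add_mod, Nat.add_sub_cancel' hkn, hnP]
          have hA : h % P < P := Nat.mod_lt _ (by omega)
          have hB : (n - h) % P < P := Nat.mod_lt _ (by omega)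
          set A := h % P
          set B := (n - h) % P
          rcases lt_or_ge (A + B) P with hlt2 | hge2
          · exact absurd hcond (by omega)
          · have : (A + B) % P = A + B - P := by
              rw [Nat.mod_eq_sub_mod hge2, Nat.mod_eq_of_lt (by omega)]
            omega
        · -- i ≥ L + 2 : no carry
          have hiL : L + 2 ≤ i := by omega
          set d := 2 ^ (i - (L + 2)) with hd
          have hd1 : 1 ≤ d := Nat.one_le_two_pow
          have hPd : 2 ^ i = 4 * a * d := by
            rw [hd, ha, show (4:ℕ) = 2 ^ 2 from rfl, ← pow_add, ← pow_add]
            congr 1; omega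
          set g := k % d with hg
          have hgd : g < d := Nat.mod_lt _ (by omega)
          have hmod1 : (4 * t) % (2 ^ i) = 4 * a * g := by
            rw [hPd, ht, hg]
            have : 4 * (a * k) = 4 * a * k := by ring
            rw [this, Nat.mul_mod_mul_left]
          have hle : 4 * a * g + 4 * a ≤ 4 * a * d := by
            have h5 := Nat.mul_le_mul_left (4 * a) (Nat.succ_le_of_lt hgd)
            rw [Nat.mul_succ] at h5
            exact h5
          have hmod2 : (n - h) % (2 ^ i) = 4 * a * g + e := by
            rw [hnh, Nat.add_mod, hmod1, Nat.mod_eq_of_lt (show e < 2 ^ i by omega),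
              Nat.mod_eq_of_lt (show 4 * a * g + e < 2 ^ i by omega)]
          have hmod3 : h % 2 ^ i = h := Nat.mod_eq_of_lt (by omega)
          rw [hmod2, hmod3] at hcond
          omega
      · rintro rfl
        refine ⟨⟨by omega, hLb⟩, ?_⟩
        have hP : 2 ^ (L + 1) = 2 * a := by rw [pow_succ, ha]; ring
        have hmod2 : (n - h) % 2 ^ (L + 1) = e := by
          rw [hnh, hP]
          have h4t : 4 * t = 2 * a * (2 * k) := by rw [ht]; ring
          rw [h4t, Nat.mul_add_mod, Nat.mod_eq_of_lt (by omega)]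
        have hmod3 : h % 2 ^ (L + 1) = h := Nat.mod_eq_of_lt (by rw [hP]; omega)
        rw [hmod2, hmod3, hP]
        omega
    rw [hfilt, Finset.card_singleton]
  have hC0 : Nat.choose n h ≠ 0 := (Nat.choose_pos hkn).ne'
  have hdvd2 : 2 ∣ Nat.choose n h := by
    have := pow_padicValNat_dvd (p := 2) (n := Nat.choose n h)
    rwa [hval, pow_one] at this
  have hndvd4 : ¬ (4 ∣ Nat.choose n h) := by
    have := pow_succ_padicValNat_not_dvd (p := 2) hC0
    rwa [hval, show (2:ℕ) ^ (1 + 1) = 4 by norm_num] at this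
  omega
end

section
/- Let k be a positive integer, let h ≥ 2 be an integer, and let m = 2^(⌊log₂ h⌋+1)·k − 1. Then the binomial coefficient C(m+h−1, h) is even. -/
open Finset Pointwise

lemma auxA : ∀ i n k : ℕ, n / 2 ^ i % 2 = 0 → k / 2 ^ i % 2 = 1 → 2 ∣ Nat.choose n k := by
  haveI : Fact (Nat.Prime 2) := ⟨Nat.prime_two⟩
  intro i
  induction i with
  | zero =>
    intro n k h1 h2
    simp only [pow_zero, Nat.div_one] at h1 h2
    have H := @Choose.choose_modEq_choose_mod_mul_choose_div_nat n k 2 _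
    rw [h1, h2] at H
    simp [Nat.choose] at H
    exact (Nat.modEq_zero_iff_dvd).mp H
  | succ i ih =>
    intro n k h1 h2
    have e1 : n / 2 / 2 ^ i = n / 2 ^ (i + 1) := by
      rw [Nat.div_div_eq_div_mul, ← pow_succ']
    have e2 : k / 2 / 2 ^ i = k / 2 ^ (i + 1) := by
      rw [Nat.div_div_eq_div_mul, ← pow_succ']
    have hd : 2 ∣ Nat.choose (n / 2) (k / 2) := ih _ _ (by rw [e1]; exact h1) (by rw [e2]; exact h2)
    have H := @Choose.choose_modEq_choose_mod_mul_choose_div_nat n k 2 _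
    have H0 : Nat.choose n k ≡ 0 [MOD 2] :=
      H.trans (Nat.modEq_zero_iff_dvd.mpr (hd.mul_left _))
    exact Nat.modEq_zero_iff_dvd.mp H0

theorem choose_even_of_m_sub_one (k h m : ℕ) (hk : 0 < k) (hh : 2 ≤ h)
    (hm : m = 2 ^ (Nat.log 2 h + 1) * k - 1) :
    2 ∣ Nat.choose (m + h - 1) h := by
  set L := Nat.log 2 h with hL
  set t := h / 2 with ht
  have ht1 : 1 ≤ t := Nat.one_le_div_iff (by norm_num) |>.mpr hh
  set j := t.factorization 2 with hj
  set u := t / 2 ^ j with hu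
  have htu : 2 ^ j * u = t := Nat.ordProj_mul_ordCompl_eq_self t 2
  have huodd : ¬ 2 ∣ u := Nat.not_dvd_ordCompl Nat.prime_two (by omega)
  have hu1 : 1 ≤ u := Nat.pos_of_ne_zero (by rintro h0; rw [h0, mul_zero] at htu; omega)
  set P := 2 ^ (j + 1) with hP
  have hP2 : 2 ≤ P := by
    have : 2 ^ 1 ≤ 2 ^ (j + 1) := Nat.pow_le_pow_right (by norm_num) (by omega)
    simpa using this
  set b := h % 2 with hb
  have hb1 : b ≤ 1 := by omega
  have hhb : h = b + P * u := by
    have := Nat.mod_add_div h 2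
    have : h = b + 2 * t := by omega
    rw [this, ← htu, hP, pow_succ']
    ring
  -- j + 1 ≤ L
  have hPh : P ≤ h := by nlinarith [Nat.mod_add_div h 2]
  have hjL : j + 1 ≤ L := (Nat.le_log_iff_pow_le (by norm_num) (by omega)).mpr hPh
  set w := u - 1 with hw
  have huw : u = w + 1 := by omega
  -- h - 2 = (b + P - 2) + P * w
  have hh2 : h - 2 = (b + P - 2) + P * w := by
    rw [hhb, huw]; have : P * (w + 1) = P * w + P := by ring
    omega
  -- n
  set n := m + h - 1 with hn
  have hQk : 1 ≤ 2 ^ (L + 1) * k := Nat.one_le_iff_ne_zero.mpr (by positivity)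
  have hnval : n = (h - 2) + P * (2 ^ (L - j) * k) := by
    have hsplit : 2 ^ (L + 1) = P * 2 ^ (L - j) := by
      rw [hP, ← pow_add]; congr 1; omega
    have : n = 2 ^ (L + 1) * k + (h - 2) := by omega
    rw [this, hsplit]; ring
  apply auxA (j + 1) n h
  · rw [hnval, ← hP, Nat.add_mul_div_left _ _ (by omega : 0 < P), hh2,
      Nat.add_mul_div_left _ _ (by omega : 0 < P), Nat.div_eq_of_lt (by omega)]
    have h2w : w % 2 = 0 := by omega
    have : 2 ∣ 2 ^ (L - j) * k := Dvd.dvd.mul_right (dvd_pow_self 2 (by omega)) k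
    omega
  · rw [hhb, ← hP, Nat.add_mul_div_left _ _ (by omega : 0 < P), Nat.div_eq_of_lt (by omega)]
    omega
end
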